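/- arXiv:math/0601659 — 8 statements merged into one kernel-verified Lean document; each statement's English description precedes it below -/
import Mathlib

section
/- The simple $s$-$2$-cluster $C_s$ (union of $s$ copies of $K_k$, $k\ge 3$, pairwise intersecting in one fixed pair of vertices) is balanced: every subgraph $H\subseteq C_s$ satisfies $e(H)/v(H) \le e(C_s)/v(C_s)$. -/
open scoped Classical

/-- The "block" of a vertex of the simple `s`-`2`-cluster. -/
def blk {s k : ℕ} : Sum (Fin 2) (Fin s × Fin (k - 2)) → Option (Fin s)
  | Sum.inl _ => none
  | Sum.inr x => some x.1

/-- The simple `s`-`2`-cluster `C_s`: union of `s` copies of `K_k` all sharing the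
same two (hub) vertices and otherwise pairwise disjoint. -/
def cluster (s k : ℕ) : SimpleGraph (Sum (Fin 2) (Fin s × Fin (k - 2))) where
  Adj u v := u ≠ v ∧ (blk u = none ∨ blk v = none ∨ blk u = blk v)
  symm := by
    refine ⟨?_⟩
    rintro u v ⟨h1, h2⟩
    exact ⟨h1.symm, by tauto⟩
  loopless := by
    refine ⟨?_⟩
    rintro u ⟨h, -⟩
    exact h rfl

/-!
Sum `deg_H v + 1` over the vertices of `H`. With `a` hubs and `b` block vertices in `H`, a hub
contributes at most `a + b` and a block vertex at most `a + (k - 2)` (the hubs plus its own block),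
so `2 e(H) + v(H) ≤ a² + 2ab + (k - 2) b`, with equality for `C_s` itself. Comparing the ratio of
this bound to `a + b` with its value at `a = 2`, `b = s (k - 2)` is a polynomial inequality, checked
for each `a ∈ {0, 1, 2}`.
-/

open Finset SimpleGraph

namespace SimpleGraph.Subgraph

variable {V : Type*} {G : SimpleGraph V}

lemma degree_lt_card_of_forall_adj_mem (H : G.Subgraph) {v : V} [Fintype (H.neighborSet v)]
    {T : Finset V} (hv : v ∈ T) (hT : ∀ w, H.Adj v w → w ∈ T) : H.degree v < #T := by
  rw [degree, ← Set.toFinset_card]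
  refine card_lt_card ((ssubset_insert ?_).trans_subset (insert_subset hv ?_))
  · simpa using H.loopless.irrefl v
  · intro w hw
    exact hT w (by simpa using hw)

lemma degree_lt_card_verts [Fintype V] (H : G.Subgraph) {v : V} (hv : v ∈ H.verts) :
    H.degree v < #H.verts.toFinset :=
  H.degree_lt_card_of_forall_adj_mem (Set.mem_toFinset.2 hv)
    fun _ hw => Set.mem_toFinset.2 hw.snd_mem

lemma sum_degree_eq_two_mul_ncard_edgeSet [Fintype V] (H : G.Subgraph) :
    ∑ v ∈ H.verts.toFinset, H.degree v = 2 * H.edgeSet.ncard := by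
  have hzero : ∀ v ∉ H.verts.toFinset, H.degree v = 0 := fun v hv =>
    Fintype.card_eq_zero_iff.2 ⟨fun w => hv (Set.mem_toFinset.2 w.2.fst_mem)⟩
  rw [sum_subset (subset_univ _) fun v _ hv => hzero v hv, Set.ncard_eq_toFinset_card']
  simp only [← degree_spanningCoe]
  convert H.spanningCoe.sum_degrees_eq_twice_card_edges using 3
  ext e
  simp

end SimpleGraph.Subgraph

section cluster

variable {s k : ℕ}

lemma cluster_neighborFinset_inl (x : Fin 2) :
    (cluster s k).neighborFinset (.inl x) = univ.erase (.inl x) := by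
  ext w
  rw [mem_neighborFinset]
  simp [cluster, blk, eq_comm]

lemma cluster_neighborFinset_inr (p : Fin s × Fin (k - 2)) :
    (cluster s k).neighborFinset (.inr p) = (univ.disjSum ({p.1} ×ˢ univ)).erase (.inr p) := by
  ext (x | q) <;> rw [mem_neighborFinset]
  · simp [cluster, blk]
  · simp [cluster, blk, Prod.ext_iff, eq_comm]

lemma cluster_degree_inl (x : Fin 2) : (cluster s k).degree (.inl x) = 1 + s * (k - 2) := by
  rw [← card_neighborFinset_eq_degree, cluster_neighborFinset_inl, card_erase_of_mem (mem_univ _)]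
  simp

lemma cluster_degree_inr (p : Fin s × Fin (k - 2)) :
    (cluster s k).degree (.inr p) = k - 2 + 1 := by
  have hc : 0 < k - 2 := p.2.pos
  rw [← card_neighborFinset_eq_degree, cluster_neighborFinset_inr, card_erase_of_mem (by simp)]
  simp
  omega

lemma two_mul_ncard_edgeSet_cluster :
    2 * (cluster s k).edgeSet.ncard = 2 + s * (k - 2) * (k - 2 + 3) := by
  rw [Set.ncard_eq_toFinset_card', ← edgeFinset, ← sum_degrees_eq_twice_card_edges,
    Fintype.sum_sum_type]
  simp only [cluster_degree_inl, cluster_degree_inr, sum_const, card_univ, Fintype.card_fin,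
    Fintype.card_prod, smul_eq_mul]
  ring

lemma SimpleGraph.Subgraph.degree_inr_lt_cluster (H : (cluster s k).Subgraph)
    (p : Fin s × Fin (k - 2)) : H.degree (.inr p) < #H.verts.toFinset.toLeft + (k - 2) := by
  have hT : #(H.verts.toFinset.toLeft.disjSum ({p.1} ×ˢ (univ : Finset (Fin (k - 2))))) =
      #H.verts.toFinset.toLeft + (k - 2) := by
    simp
  rw [← hT]
  refine H.degree_lt_card_of_forall_adj_mem (by simp) fun w hw => ?_
  have hwG : w ∈ (cluster s k).neighborFinset (.inr p) := (mem_neighborFinset _ _ _).2 hw.adj_sub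
  rw [cluster_neighborFinset_inr] at hwG
  rcases w with x | q
  · simpa using hw.snd_mem
  · simpa using (mem_of_mem_erase hwG)

lemma SimpleGraph.Subgraph.two_mul_ncard_edgeSet_add_card_le_cluster
    (H : (cluster s k).Subgraph) :
    2 * H.edgeSet.ncard + #H.verts.toFinset ≤
      #H.verts.toFinset.toLeft * #H.verts.toFinset +
        #H.verts.toFinset.toRight * (#H.verts.toFinset.toLeft + (k - 2)) := by
  set S := H.verts.toFinset
  calc 2 * H.edgeSet.ncard + #S = ∑ v ∈ S, (H.degree v + 1) := by
        rw [sum_add_distrib, H.sum_degree_eq_two_mul_ncard_edgeSet, card_eq_sum_ones]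
    _ = ∑ x ∈ S.toLeft, (H.degree (.inl x) + 1) +
          ∑ p ∈ S.toRight, (H.degree (.inr p) + 1) :=
        sum_sum_eq_sum_toLeft_add_sum_toRight _ _
    _ ≤ ∑ x ∈ S.toLeft, #S + ∑ p ∈ S.toRight, (#S.toLeft + (k - 2)) := by
        refine add_le_add (sum_le_sum fun x hx => ?_) (sum_le_sum fun p _ => ?_)
        · exact H.degree_lt_card_verts (by simpa [S] using hx)
        · exact H.degree_inr_lt_cluster p
    _ = #S.toLeft * #S + #S.toRight * (#S.toLeft + (k - 2)) := by
        simp only [sum_const, smul_eq_mul]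

end cluster

/-- With `c = k - 2`, the constant `4 + s * c * (c + 4)` is `2 e(C_s) + v(C_s)`. -/
lemma cluster_density_cross_le {a b s c : ℕ} (ha : a ≤ 2) (hb : b ≤ s * c) :
    (a * a + 2 * a * b + c * b) * (2 + s * c) ≤ (4 + s * c * (c + 4)) * (a + b) := by
  have hbc : b * c ≤ b * (s * c) := by
    rcases Nat.eq_zero_or_pos s with rfl | hs
    · simp_all
    · exact Nat.mul_le_mul_left b (Nat.le_mul_of_pos_left c hs)
  interval_cases a <;> nlinarith

theorem stmt1_general (s k : ℕ)
    (H : (cluster s k).Subgraph) :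
    (H.edgeSet.ncard : ℚ) / (H.verts.ncard : ℚ) ≤
      ((cluster s k).edgeSet.ncard : ℚ) /
        (Fintype.card (Sum (Fin 2) (Fin s × Fin (k - 2))) : ℚ) := by
  have hcount := Nat.mul_le_mul_right (2 + s * (k - 2)) H.two_mul_ncard_edgeSet_add_card_le_cluster
  set S := H.verts.toFinset
  have hS : #S.toLeft + #S.toRight = #S := card_toLeft_add_card_toRight
  have hcross := cluster_density_cross_le (s := s) (c := k - 2)
    ((card_le_univ S.toLeft).trans_eq (Fintype.card_fin 2))
    ((card_le_univ S.toRight).trans_eq (by simp))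
  have hcluster := two_mul_ncard_edgeSet_cluster (s := s) (k := k)
  have hcard : H.edgeSet.ncard * (2 + s * (k - 2)) ≤ (cluster s k).edgeSet.ncard * #S := by
    rw [← hS] at hcount ⊢
    nlinarith
  rw [Set.ncard_eq_toFinset_card' H.verts, Fintype.card_sum, Fintype.card_prod,
    Fintype.card_fin, Fintype.card_fin, Fintype.card_fin]
  rcases (#S).eq_zero_or_pos with hempty | hpos
  · rw [hempty, Nat.cast_zero, div_zero]
    positivity
  rw [div_le_div_iff₀ (by exact_mod_cast hpos) (by positivity)]
  exact_mod_cast hcard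

/-- `C_s` is balanced: every (nonempty) subgraph has density at most the density of `C_s`. -/
theorem stmt1 (s k : ℕ) (hk : 3 ≤ k) (hs : 1 ≤ s)
    (H : (cluster s k).Subgraph) (hne : H.verts.Nonempty) :
    (H.edgeSet.ncard : ℚ) / (H.verts.ncard : ℚ) ≤
      ((cluster s k).edgeSet.ncard : ℚ) /
        (Fintype.card (Sum (Fin 2) (Fin s × Fin (k - 2))) : ℚ) :=
  stmt1_general s k H
end

section
/- Let $k\ge 4$ and $s\ge 3$. Every $s$-bunch of $k$-cliques has maximum density at least that of the simple $s$-$2$-cluster: $m(B_s) \ge d(C_s) = \frac{k+1}{2}-\frac{k}{sk-2s+2}$. -/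
open scoped Classical

/-- The union graph of a family of cliques: two vertices are adjacent iff they are
distinct and lie together in some member of the family. -/
def cliquesGraph {α : Type*} {s : ℕ} (F : Fin s → Finset α) : SimpleGraph α where
  Adj u v := u ≠ v ∧ ∃ i, u ∈ F i ∧ v ∈ F i
  symm := by
    constructor
    rintro u v ⟨h, i, h1, h2⟩
    exact ⟨h.symm, i, h2, h1⟩
  loopless := by
    constructor
    rintro u ⟨h, -⟩
    exact h rfl

/-- `F` is an `s`-bunch of `k`-cliques: each `F i` has `k` vertices, and for `i ≥ 1`
the clique `F i` contains a vertex outside the union of the previous cliques and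
meets that union in at least two vertices. -/
def IsBunch {α : Type*} [DecidableEq α] (k : ℕ) {s : ℕ} (F : Fin s → Finset α) : Prop :=
  (∀ i, (F i).card = k) ∧
  ∀ i : Fin s, 0 < (i : ℕ) →
    ¬ F i ⊆ (Finset.Iio i).biUnion F ∧ 2 ≤ (F i ∩ (Finset.Iio i).biUnion F).card


/-!
Take all of `B_s` and let `v`, `e` be its numbers of vertices and edges. The `i`-th clique
(`i ≥ 2`) meets the earlier ones in `a` vertices with `2 ≤ a < k`, so it adds `k - a ≤ k - 2`
new vertices and at least `C(k,2) - C(a,2)` new edges. Hence, with `D = k + (s-1)(k-2)`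
(the order of `C_s`), `v ≤ D` and `k v + D - 2k ≤ 2e`, and these two bounds give
`e / v ≥ (k+1)/2 - k/D` as soon as `D ≥ 2k`, i.e. for `k ≥ 4` and `s ≥ 3`.
-/

open Finset

section CliqueEdges

variable {α : Type*} [DecidableEq α]

def cliqueEdges (t : Finset α) : Finset (Sym2 α) := t.offDiag.image Sym2.mk.uncurry

lemma mk_mem_cliqueEdges {t : Finset α} {u v : α} :
    s(u, v) ∈ cliqueEdges t ↔ u ∈ t ∧ v ∈ t ∧ u ≠ v := by
  simp only [cliqueEdges, mem_image, mem_offDiag, Prod.exists, Function.uncurry_apply_pair,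
    Sym2.eq_iff]
  constructor
  · rintro ⟨a, b, ⟨ha, hb, hab⟩, ⟨rfl, rfl⟩ | ⟨rfl, rfl⟩⟩
    exacts [⟨ha, hb, hab⟩, ⟨hb, ha, hab.symm⟩]
  · rintro ⟨hu, hv, huv⟩
    exact ⟨u, v, ⟨hu, hv, huv⟩, .inl ⟨rfl, rfl⟩⟩

lemma cliqueEdges_mono {t u : Finset α} (h : t ⊆ u) : cliqueEdges t ⊆ cliqueEdges u :=
  image_subset_image (offDiag_mono h)

lemma two_mul_card_cliqueEdges (t : Finset α) :
    2 * #(cliqueEdges t) = #t * (#t - 1) := by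
  rw [cliqueEdges, Sym2.two_mul_card_image_offDiag, offDiag_card, Nat.mul_sub, mul_one]

lemma biUnion_cliqueEdges_subset {ι : Type*} (I : Finset ι) (F : ι → Finset α) :
    I.biUnion (fun i => cliqueEdges (F i)) ⊆ cliqueEdges (I.biUnion F) :=
  biUnion_subset.2 fun _ hi => cliqueEdges_mono (subset_biUnion_of_mem F hi)

/-- Adding a clique `t` to a graph on `A` creates every edge of `t` not inside `t ∩ A`. -/
lemma two_mul_card_union_cliqueEdges {A t : Finset α} {E : Finset (Sym2 α)}
    (hE : E ⊆ cliqueEdges A) :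
    2 * #E + #t * (#t - 1) ≤ 2 * #(cliqueEdges t ∪ E) + #(t ∩ A) * (#(t ∩ A) - 1) := by
  have hdisj : Disjoint (cliqueEdges t \ cliqueEdges (t ∩ A)) E := by
    refine disjoint_left.2 fun e he heE => ?_
    induction e using Sym2.ind with
    | _ u v =>
      obtain ⟨ht, hnot⟩ := mem_sdiff.1 he
      obtain ⟨hu, hv, -⟩ := mk_mem_cliqueEdges.1 (hE heE)
      obtain ⟨hut, hvt, huv⟩ := mk_mem_cliqueEdges.1 ht
      exact hnot <|
        mk_mem_cliqueEdges.2 ⟨mem_inter.2 ⟨hut, hu⟩, mem_inter.2 ⟨hvt, hv⟩, huv⟩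
  have hsplit := card_sdiff_add_card_eq_card
    (cliqueEdges_mono (inter_subset_left : t ∩ A ⊆ t))
  have hunion : #(cliqueEdges t \ cliqueEdges (t ∩ A)) + #E ≤ #(cliqueEdges t ∪ E) := by
    rw [← card_union_of_disjoint hdisj]
    exact card_le_card (union_subset_union sdiff_subset le_rfl)
  have := two_mul_card_cliqueEdges t
  have := two_mul_card_cliqueEdges (t ∩ A)
  omega

end CliqueEdges

section Bunch

variable {α : Type*} [DecidableEq α] {s : ℕ}

def firstIndices (s m : ℕ) : Finset (Fin s) := univ.filter fun j => (j : ℕ) < m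

lemma firstIndices_succ {m : ℕ} (hm : m < s) :
    firstIndices s (m + 1) = insert ⟨m, hm⟩ (firstIndices s m) := by
  ext j
  simp only [firstIndices, mem_filter, mem_univ, true_and, mem_insert, Fin.ext_iff]
  omega

lemma Iio_eq_firstIndices {m : ℕ} (hm : m < s) :
    Iio (⟨m, hm⟩ : Fin s) = firstIndices s m := by
  ext j
  simp [firstIndices, Fin.lt_def]

lemma firstIndices_self : firstIndices s s = univ := by
  ext j
  simp [firstIndices]

lemma IsBunch.card_biUnion_firstIndices {k : ℕ} {F : Fin s → Finset α} (hF : IsBunch k F)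
    {m : ℕ} (hm : m < s) :
    #((firstIndices s (m + 1)).biUnion F) ≤ k + m * (k - 2) ∧
      k * #((firstIndices s (m + 1)).biUnion F) + m * (k - 2) ≤
        2 * #((firstIndices s (m + 1)).biUnion fun i => cliqueEdges (F i)) + k := by
  induction m with
  | zero =>
    have hfirst : firstIndices s 1 = {⟨0, hm⟩} := by
      rw [firstIndices_succ hm]; simp [firstIndices]
    have hcard := hF.1 ⟨0, hm⟩
    have hedges := two_mul_card_cliqueEdges (F ⟨0, hm⟩)
    rw [hfirst, singleton_biUnion, singleton_biUnion, hcard]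
    rw [hcard] at hedges
    constructor
    · omega
    · have := Nat.le_mul_self k
      rw [Nat.mul_sub_one] at hedges
      omega
  | succ m ih =>
    obtain ⟨hv, he⟩ := ih (by omega)
    obtain ⟨hnew, htwo⟩ := hF.2 ⟨m + 1, hm⟩ (Nat.succ_pos m)
    rw [Iio_eq_firstIndices hm] at hnew htwo
    rw [firstIndices_succ hm, biUnion_insert, biUnion_insert]
    set t := F ⟨m + 1, hm⟩
    set A := (firstIndices s (m + 1)).biUnion F
    set E := (firstIndices s (m + 1)).biUnion fun i => cliqueEdges (F i)
    have hedges := two_mul_card_union_cliqueEdges (A := A) (E := E) (t := t)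
      (biUnion_cliqueEdges_subset _ F)
    have hverts := card_union_add_card_inter t A
    set a := #(t ∩ A)
    have hlt : a < k := by
      rw [← hF.1 ⟨m + 1, hm⟩]
      exact card_lt_card (ssubset_of_subset_of_ne inter_subset_left (mt inter_eq_left.1 hnew))
    rw [hF.1 ⟨m + 1, hm⟩] at hedges hverts
    zify [(by omega : 2 ≤ k), (by omega : 1 ≤ k), (by omega : 1 ≤ a)]
      at hv he hedges hverts ⊢
    -- the slack of the edge invariant in this step
    have hquad : (0 : ℤ) ≤ (a - 2) * (k - a - 1) :=
      mul_nonneg (by omega) (by omega)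
    constructor
    · linarith
    · nlinarith

lemma edgeSet_induce_biUnion (F : Fin s → Finset α) :
    ((⊤ : (cliquesGraph F).Subgraph).induce (univ.biUnion F : Set α)).edgeSet =
      ↑(univ.biUnion fun i => cliqueEdges (F i)) := by
  ext e
  induction e using Sym2.ind with
  | _ u v =>
    simp only [SimpleGraph.Subgraph.mem_edgeSet, SimpleGraph.Subgraph.induce_adj,
      cliquesGraph, coe_biUnion, coe_univ, Set.mem_univ,
      Set.iUnion_true, Set.mem_iUnion, mem_coe, mk_mem_cliqueEdges]
    constructor
    · rintro ⟨-, -, huv, i, hu, hv⟩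
      exact ⟨i, hu, hv, huv⟩
    · rintro ⟨i, hu, hv, huv⟩
      exact ⟨⟨i, hu⟩, ⟨i, hv⟩, huv, i, hu, hv⟩

end Bunch

/-- Cross-multiplied, the inequality becomes `0 ≤ (D - 2k)(D - v)`. -/
theorem add_one_div_two_sub_div_le_div {K : Type*} [Field K] [LinearOrder K]
    [IsStrictOrderedRing K]
    {k D v e : K} (hD : 2 * k ≤ D) (hv : 0 < v) (hvD : v ≤ D)
    (he : k * v + D - 2 * k ≤ 2 * e) :
    (k + 1) / 2 - k / D ≤ e / v := by
  have hDpos : 0 < D := by linarith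
  rw [div_sub_div _ _ two_ne_zero hDpos.ne', div_le_div_iff₀ (by positivity) hv]
  nlinarith [mul_le_mul_of_nonneg_right he hDpos.le,
    mul_nonneg (sub_nonneg.2 hD) (sub_nonneg.2 hvD)]

theorem stmt2_general (k s : ℕ) (hk : 4 ≤ k) (hs : 3 ≤ s)
    {α : Type} [DecidableEq α] (F : Fin s → Finset α) (hF : IsBunch k F) :
    ∃ H : (cliquesGraph F).Subgraph, H.verts.Nonempty ∧
      ((k : ℚ) + 1) / 2 - (k : ℚ) / ((s : ℚ) * k - 2 * s + 2) ≤
        (H.edgeSet.ncard : ℚ) / (H.verts.ncard : ℚ) := by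
  obtain ⟨hv, he⟩ := hF.card_biUnion_firstIndices (m := s - 1) (by omega)
  rw [Nat.sub_add_cancel (by omega), firstIndices_self] at hv he
  have hk_le : k ≤ #(univ.biUnion F) :=
    hF.1 ⟨0, by omega⟩ ▸ card_le_card (subset_biUnion_of_mem F (mem_univ _))
  refine ⟨(⊤ : (cliquesGraph F).Subgraph).induce (univ.biUnion F : Set α), ?_, ?_⟩
  · exact coe_nonempty.2 (card_pos.1 (by omega))
  rw [edgeSet_induce_biUnion, SimpleGraph.Subgraph.induce_verts, Set.ncard_coe_finset,
    Set.ncard_coe_finset]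
  have hcast : (((s - 1) * (k - 2) : ℕ) : ℚ) = (s - 1) * (k - 2) := by
    push_cast [Nat.cast_sub (by omega : 1 ≤ s), Nat.cast_sub (by omega : 2 ≤ k)]
    ring
  have hkq : (4 : ℚ) ≤ k := by exact_mod_cast hk
  have hk2 : (2 : ℚ) ≤ k := by linarith
  have hsq : (3 : ℚ) ≤ s := by exact_mod_cast hs
  have hvq := (Nat.cast_le (α := ℚ)).2 hv
  have heq := (Nat.cast_le (α := ℚ)).2 he
  push_cast [hcast] at hvq heq
  apply add_one_div_two_sub_div_le_div
  · nlinarith [mul_nonneg (sub_nonneg.2 hsq) (sub_nonneg.2 hk2)]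
  · exact_mod_cast (by omega : 0 < #(univ.biUnion F))
  · linarith
  · linarith

/-- Every `s`-bunch of `k`-cliques (`k ≥ 4`, `s ≥ 3`) has maximum density at least
`(k+1)/2 - k/(sk-2s+2)`, the density of the simple `s`-`2`-cluster. -/
theorem stmt2 (k s : ℕ) (hk : 4 ≤ k) (hs : 3 ≤ s)
    {α : Type} [DecidableEq α] [Fintype α] (F : Fin s → Finset α) (hF : IsBunch k F) :
    ∃ H : (cliquesGraph F).Subgraph, H.verts.Nonempty ∧
      ((k : ℚ) + 1) / 2 - (k : ℚ) / ((s : ℚ) * k - 2 * s + 2) ≤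
        (H.edgeSet.ncard : ℚ) / (H.verts.ncard : ℚ) :=
  stmt2_general k s hk hs F hF
end

section
/- Biased Erdős–Selfridge criterion: if $\sum_{A\in\mathcal{F}} (1+b)^{-|A|/a} < 1$, then in the biased $(a{:}b)$ Maker–Breaker game on $(X,\mathcal{F})$ in which Breaker moves first (Maker claims $a$ elements and Breaker claims $b$ elements per move), Breaker has a winning strategy. -/
/-- `MWin board F a b t M B` : in the biased `(a : b)` Maker–Breaker positional game on
the board `board` with family of winning sets `F`, from the position where Maker has
claimed `M`, Breaker has claimed `B`, and it is Maker's turn iff `t = true`, Maker has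
a winning strategy.  In each move Maker claims `a` previously unclaimed elements and
Breaker claims `b` previously unclaimed elements (or all remaining elements, if fewer
are left).  Maker wins when he has claimed all elements of some winning set. -/
inductive MWin {α : Type*} [DecidableEq α] (board : Finset α) (F : Set (Finset α))
    (a b : ℕ) : Bool → Finset α → Finset α → Prop
  | win (t : Bool) (M B A : Finset α) (hA : A ∈ F) (hsub : A ⊆ M) : MWin board F a b t M B
  | maker (M B m : Finset α) (hm : m ⊆ board \ (M ∪ B))
      (hcard : m.card = min a (board \ (M ∪ B)).card)
      (h : MWin board F a b false (M ∪ m) B) : MWin board F a b true M B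
  | breaker (M B : Finset α)
      (h : ∀ m ⊆ board \ (M ∪ B), m.card = min b (board \ (M ∪ B)).card →
        MWin board F a b true M (B ∪ m)) : MWin board F a b false M B

/-! The Erdős–Selfridge potential argument with `q = (1 + b) ^ (1 / a)`. Every winning set `A`
not yet touched by Breaker contributes `q ^ (-|A \ M|)` to the potential, and the weight of a free
element is the total contribution of the surviving sets containing it. Breaker claims greedily
`b` elements of largest weight, each lowering the potential by its current weight; Maker's `a`
elements then raise it by at most `(q ^ a - 1) = b` times the largest weight left. So the potential
does not increase over a round. It starts below `1`, whereas a completed winning set alone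
contributes `1`. -/

open Finset

namespace MakerBreaker

variable {α : Type} [DecidableEq α]

section Potential

variable (F : Finset (Finset α)) (q : ℝ)

noncomputable def potential (M B : Finset α) : ℝ :=
  ∑ A ∈ F with Disjoint A B, q ^ (-(#(A \ M) : ℤ))

noncomputable def weight (M B : Finset α) (x : α) : ℝ :=
  ∑ A ∈ F with Disjoint A B ∧ x ∈ A, q ^ (-(#(A \ M) : ℤ))

variable {F q}

lemma weight_nonneg (hq : 0 ≤ q) (M B : Finset α) (x : α) : 0 ≤ weight F q M B x :=
  sum_nonneg fun _ _ => zpow_nonneg hq _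

lemma potential_anti_right (hq : 0 ≤ q) (M : Finset α) {B B' : Finset α} (hB : B ⊆ B') :
    potential F q M B' ≤ potential F q M B :=
  sum_le_sum_of_subset_of_nonneg (monotone_filter_right _ fun _ _ hA => hA.mono_right hB)
    fun _ _ _ => zpow_nonneg hq _

lemma weight_anti_right (hq : 0 ≤ q) (M : Finset α) {B B' : Finset α} (hB : B ⊆ B') (x : α) :
    weight F q M B' x ≤ weight F q M B x :=
  sum_le_sum_of_subset_of_nonneg
    (monotone_filter_right _ fun _ _ hA => ⟨hA.1.mono_right hB, hA.2⟩)
    fun _ _ _ => zpow_nonneg hq _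

lemma one_le_potential (hq : 0 ≤ q) {M B A : Finset α} (hA : A ∈ F) (hAM : A ⊆ M)
    (hMB : Disjoint M B) : 1 ≤ potential F q M B := by
  have hterm : q ^ (-(#(A \ M) : ℤ)) = 1 := by simp [sdiff_eq_empty_iff_subset.mpr hAM]
  rw [← hterm]
  exact single_le_sum (f := fun A => q ^ (-(#(A \ M) : ℤ))) (fun _ _ => zpow_nonneg hq _)
    (mem_filter.mpr ⟨hA, hMB.mono_left hAM⟩)

lemma potential_insert_right (M B : Finset α) (y : α) :
    potential F q M (insert y B) = potential F q M B - weight F q M B y := by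
  have hsplit := sum_filter_add_sum_filter_not {A ∈ F | Disjoint A B} (y ∈ ·)
    fun A => q ^ (-(#(A \ M) : ℤ))
  simp only [filter_filter] at hsplit
  have halive : {A ∈ F | Disjoint A (insert y B)} = {A ∈ F | Disjoint A B ∧ y ∉ A} :=
    filter_congr fun A _ => by rw [disjoint_insert_right, and_comm]
  rw [potential, potential, weight, halive, ← hsplit]
  ring

lemma zpow_neg_card_sdiff_insert_le (hq : 1 ≤ q) (A M : Finset α) (x : α) :
    q ^ (-(#(A \ insert x M) : ℤ)) ≤ q * q ^ (-(#(A \ M) : ℤ)) := by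
  have hcard : #(A \ M) ≤ #(A \ insert x M) + 1 := by
    rw [sdiff_insert]
    have := pred_card_le_card_erase (s := A \ M) (a := x)
    omega
  rw [← zpow_one_add₀ (by positivity)]
  exact zpow_le_zpow_right₀ hq (by omega)

lemma weight_insert_left_le (hq : 1 ≤ q) (M B : Finset α) (x y : α) :
    weight F q (insert x M) B y ≤ q * weight F q M B y := by
  rw [weight, weight, mul_sum]
  exact sum_le_sum fun A _ => zpow_neg_card_sdiff_insert_le hq A M x

lemma potential_insert_left_le (hq : 1 ≤ q) (M B : Finset α) (x : α) :
    potential F q (insert x M) B ≤ potential F q M B + (q - 1) * weight F q M B x := by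
  have hweight : (q - 1) * weight F q M B x =
      ∑ A ∈ F with Disjoint A B, if x ∈ A then (q - 1) * q ^ (-(#(A \ M) : ℤ)) else 0 := by
    rw [← sum_filter, filter_filter, weight, mul_sum]
  rw [hweight, potential, potential, ← sum_add_distrib]
  refine sum_le_sum fun A _ => ?_
  by_cases hx : x ∈ A
  · simp only [hx, if_true]
    linarith [zpow_neg_card_sdiff_insert_le hq A M x]
  · simp [hx, sdiff_insert_of_notMem hx]

/-- Each element Maker claims multiplies the weights of the remaining elements by at most `q`. -/
lemma potential_union_left_le (hq : 1 ≤ q) (B m : Finset α) :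
    ∀ (M : Finset α) (W : ℝ), 0 ≤ W → (∀ x ∈ m, weight F q M B x ≤ W) →
      potential F q (M ∪ m) B ≤ potential F q M B + (q ^ #m - 1) * W := by
  induction m using Finset.induction_on with
  | empty => simp
  | @insert x s hxs ih =>
    intro M W hW hm
    have hrest := ih (insert x M) (q * W) (by positivity) fun y hy =>
      (weight_insert_left_le hq M B x y).trans
        (mul_le_mul_of_nonneg_left (hm y (mem_insert_of_mem hy)) (by positivity))
    have hx := (potential_insert_left_le hq M B x).trans
      (add_le_add_right (mul_le_mul_of_nonneg_left (hm x (mem_insert_self x s))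
        (sub_nonneg.mpr hq)) _)
    rw [union_insert, ← insert_union, card_insert_of_notMem hxs]
    linear_combination hrest + hx

/-- Breaker's greedy move: claim, one at a time, an element of largest current weight. -/
lemma exists_greedy_subset (hq : 0 ≤ q) (M : Finset α) (k : ℕ) :
    ∀ (S B : Finset α), k ≤ #S → ∃ Y ⊆ S, #Y = k ∧ ∀ x ∈ S \ Y,
      potential F q M (B ∪ Y) + k * weight F q M (B ∪ Y) x ≤ potential F q M B := by
  induction k with
  | zero => intro S B _; exact ⟨∅, empty_subset S, card_empty, by simp⟩
  | succ k ih =>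
    intro S B hk
    obtain ⟨y, hyS, hymax⟩ := exists_max_image S (weight F q M B) (card_pos.mp (by omega))
    obtain ⟨Y, hYS, hYk, hY⟩ := ih (S.erase y) (insert y B) (by rw [card_erase_of_mem hyS]; omega)
    have hyY : y ∉ Y := fun h => notMem_erase y S (hYS h)
    refine ⟨insert y Y, insert_subset hyS (hYS.trans (erase_subset y S)),
      by rw [card_insert_of_notMem hyY, hYk], fun x hx => ?_⟩
    rw [sdiff_insert, ← erase_sdiff_comm] at hx
    have hxS : x ∈ S := mem_of_mem_erase (mem_sdiff.mp hx).1
    have hweight : weight F q M (insert y B ∪ Y) x ≤ weight F q M B y :=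
      (weight_anti_right hq M ((subset_insert y B).trans subset_union_left) x).trans
        (hymax x hxS)
    rw [union_insert, ← insert_union]
    have := hY x hx
    rw [potential_insert_right] at this
    push_cast
    linarith

lemma exists_breaker_move_potential_le (hq : 1 ≤ q) {a b : ℕ} (hqa : q ^ a ≤ 1 + b)
    (S M B : Finset α) :
    ∃ Y ⊆ S, #Y = min b #S ∧ ∀ m ⊆ S \ Y, #m ≤ a →
      potential F q (M ∪ m) (B ∪ Y) ≤ potential F q M B := by
  have hq0 : 0 ≤ q := zero_le_one.trans hq
  obtain ⟨Y, hYS, hYcard, hY⟩ :=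
    exists_greedy_subset (F := F) hq0 M _ S B (min_le_right b #S)
  refine ⟨Y, hYS, hYcard, fun m hm hma => ?_⟩
  obtain rfl | ⟨x₀, hx₀⟩ := m.eq_empty_or_nonempty
  · simpa using potential_anti_right (F := F) hq0 M (subset_union_left (s₂ := Y))
  obtain ⟨x, hxm, hxmax⟩ := exists_max_image m (weight F q M (B ∪ Y)) ⟨x₀, hx₀⟩
  have hxS : x ∈ S \ Y := hm hxm
  have hYb : #Y = b := by
    have : #Y < #S := card_lt_card (ssubset_iff_of_subset hYS |>.mpr ⟨x, mem_sdiff.mp hxS⟩)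
    omega
  have hW : 0 ≤ weight F q M (B ∪ Y) x := weight_nonneg hq0 _ _ _
  have hmaker := potential_union_left_le hq (B ∪ Y) m M _ hW hxmax
  have hgrowth : (q ^ #m - 1) * weight F q M (B ∪ Y) x ≤ b * weight F q M (B ∪ Y) x :=
    mul_le_mul_of_nonneg_right (by linarith [pow_le_pow_right₀ hq hma]) hW
  have hgreedy := hY x hxS
  rw [← hYcard, hYb] at hgreedy
  linarith

end Potential

def BreakerInvariant (X : Finset α) (F : Finset (Finset α)) (q : ℝ) (a : ℕ) :
    Bool → Finset α → Finset α → Prop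
  | true, M, B => ∀ m ⊆ X \ (M ∪ B), #m ≤ a → potential F q (M ∪ m) B < 1
  | false, M, B => potential F q M B < 1

variable {X : Finset α} {F : Finset (Finset α)} {q : ℝ} {a b : ℕ}

lemma BreakerInvariant.potential_lt_one {t : Bool} {M B : Finset α}
    (h : BreakerInvariant X F q a t M B) : potential F q M B < 1 := by
  cases t
  · exact h
  · simpa using h ∅ (empty_subset _) (by simp)

theorem not_mWin_of_breakerInvariant (hq : 1 ≤ q) (hqa : q ^ a ≤ 1 + b) {t : Bool}
    {M B : Finset α} (hw : MWin X (↑F : Set (Finset α)) a b t M B) :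
    Disjoint M B → BreakerInvariant X F q a t M B → False := by
  induction hw with
  | win t M B A hA hAM =>
    exact fun hMB hinv =>
      (one_le_potential (zero_le_one.trans hq) hA hAM hMB).not_gt hinv.potential_lt_one
  | maker M B m hm hcard _ ih =>
    refine fun hMB hinv => ih ?_ (hinv m hm (hcard ▸ min_le_left _ _))
    exact disjoint_union_left.mpr
      ⟨hMB, disjoint_of_subset_left hm (sdiff_disjoint.mono_right subset_union_right)⟩
  | breaker M B _ ih =>
    intro hMB hinv
    obtain ⟨Y, hYS, hYcard, hY⟩ :=
      exists_breaker_move_potential_le (F := F) hq hqa (X \ (M ∪ B)) M B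
    refine ih Y hYS hYcard ?_ fun m hm hma => ?_
    · exact disjoint_union_right.mpr
        ⟨hMB, (disjoint_of_subset_left hYS (sdiff_disjoint.mono_right subset_union_left)).symm⟩
    · rw [← union_assoc, ← sup_eq_union, ← sdiff_sdiff_left] at hm
      exact (hY m hm hma).trans_lt hinv

end MakerBreaker

open MakerBreaker

theorem stmt8_general {α : Type} [DecidableEq α] (X : Finset α) (F : Finset (Finset α))
    (a b : ℕ)
    (h : ∑ A ∈ F, ((1 : ℝ) + b) ^ (-(A.card : ℝ) / a) < 1) :
    ¬ MWin X (↑F : Set (Finset α)) a b false ∅ ∅ := by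
  set q : ℝ := (1 + b) ^ ((a : ℝ)⁻¹)
  have hb : (1 : ℝ) ≤ 1 + b := le_add_of_nonneg_right b.cast_nonneg
  have hq : 1 ≤ q := Real.one_le_rpow hb (by positivity)
  -- only an inequality, since `(a : ℝ)⁻¹ * a = 0` when `a = 0`
  have hqa : q ^ a ≤ 1 + b := by
    rw [← Real.rpow_natCast, ← Real.rpow_mul (by positivity)]
    simpa using Real.rpow_le_rpow_of_exponent_le hb
      (inv_mul_le_one_of_le₀ le_rfl (a.cast_nonneg : (0 : ℝ) ≤ a))
  have hterm (A : Finset α) : q ^ (-(#A : ℤ)) = (1 + b) ^ (-(#A : ℝ) / a) := by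
    rw [← Real.rpow_intCast, ← Real.rpow_mul (by positivity)]
    push_cast
    ring_nf
  have hinit : potential F q ∅ ∅ < 1 := by simpa [potential, hterm] using h
  exact fun hw => not_mWin_of_breakerInvariant hq hqa hw (disjoint_empty_left ∅) hinit

/-- Biased Erdős–Selfridge criterion: if `∑_{A ∈ F} (1+b)^{-|A|/a} < 1`, then Breaker
wins the biased `(a : b)` Maker–Breaker game in which Breaker moves first. -/
theorem stmt8 {α : Type} [DecidableEq α] (X : Finset α) (F : Finset (Finset α))
    (a b : ℕ) (ha : 1 ≤ a) (hb : 1 ≤ b) (hF : ∀ A ∈ F, A ⊆ X)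
    (h : ∑ A ∈ F, ((1 : ℝ) + b) ^ (-(A.card : ℝ) / a) < 1) :
    ¬ MWin X (↑F : Set (Finset α)) a b false ∅ ∅ :=
  stmt8_general X F a b h
end

section
/- If in a biased $(b{:}1)$ Maker–Breaker game with $k$ pairwise disjoint winning sets of size $s$ Maker wins whenever $s\le (b-1)\sum_{i=1}^{k-1}1/i$, then in the biased $(b{:}2)$ game with $k+1$ pairwise disjoint winning sets of size at most $s$, Maker wins whenever $s \le (\lfloor b/2\rfloor - 1)\sum_{i=1}^{k-1}\frac{1}{i}$. -/
lemma sdiff_subset_sdiff_union_of_disjoint {α : Type*} [DecidableEq α] {A board M B : Finset α}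
    (hA : A ⊆ board) (hAB : Disjoint A B) : A \ M ⊆ board \ (M ∪ B) := by
  intro x hx
  rw [Finset.mem_sdiff] at hx
  simp only [Finset.mem_sdiff, Finset.mem_union, not_or]
  exact ⟨hA hx.1, hx.2, Finset.disjoint_left.mp hAB hx.1⟩

namespace MWin

variable {α : Type*} [DecidableEq α] {board : Finset α} {F : Set (Finset α)} {a c : ℕ}

theorem of_maker_move {M B m₀ : Finset α} (hm₀ : m₀ ⊆ board \ (M ∪ B)) (hcard : m₀.card ≤ a)
    (h : ∀ m, m₀ ⊆ m → m ⊆ board \ (M ∪ B) → m.card = min a (board \ (M ∪ B)).card →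
      MWin board F a c false (M ∪ m) B) :
    MWin board F a c true M B := by
  obtain ⟨m, hm₀m, hm, hmcard⟩ := Finset.exists_subsuperset_card_eq hm₀
    (le_min hcard (Finset.card_le_card hm₀)) (min_le_right _ _)
  exact maker M B m hm hmcard (h m hm₀m hm hmcard)

theorem of_card_sdiff_le {M B A : Finset α} (hA : A ∈ F) (hAboard : A ⊆ board)
    (hAB : Disjoint A B) (hcard : (A \ M).card ≤ a) : MWin board F a c true M B :=
  of_maker_move (sdiff_subset_sdiff_union_of_disjoint hAboard hAB) hcard fun m hm _ _ =>
    win false _ B A hA (sdiff_le_iff.mp hm)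

-- Requiring free elements to remain makes each round shrink the free part, so the play ends.
theorem of_invariant (Inv : Finset α → Finset α → Prop) (ha : 0 < a)
    (hstep : ∀ M B, Inv M B → MWin board F a c true M B ∨
      (board \ (M ∪ B)).Nonempty ∧ ∃ m₀ ⊆ board \ (M ∪ B), m₀.card ≤ a ∧
        ∀ m, m₀ ⊆ m → m ⊆ board \ (M ∪ B) →
          ∀ m' ⊆ board \ (M ∪ m ∪ B), m'.card ≤ c → Inv (M ∪ m) (B ∪ m'))
    {M B : Finset α} (h : Inv M B) : MWin board F a c true M B := by
  induction hn : (board \ (M ∪ B)).card using Nat.strong_induction_on generalizing M B with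
  | _ n ih =>
  obtain hwin | ⟨hne, m₀, hm₀, hcard, hnext⟩ := hstep M B h
  · exact hwin
  refine of_maker_move hm₀ hcard fun m hm₀m hm hmcard => breaker _ _ fun m' hm' hm'card => ?_
  refine ih _ ?_ (hnext m hm₀m hm m' hm' (hm'card ▸ min_le_left _ _)) rfl
  have hshrink : board \ (M ∪ m ∪ (B ∪ m')) ⊆ (board \ (M ∪ B)) \ m := by
    intro x
    simp only [Finset.mem_sdiff, Finset.mem_union]
    tauto
  have hmpos : 0 < m.card := hmcard ▸ lt_min ha hne.card_pos
  calc _ ≤ ((board \ (M ∪ B)) \ m).card := Finset.card_le_card hshrink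
    _ = n - m.card := by rw [Finset.card_sdiff_of_subset hm, hn]
    _ < n := by omega

end MWin

-- `ρ(m)`, tuned so that the potential is `2a` on one or two boxes and yet obeys
-- `boxPotential_le_sub` from three boxes on.
noncomputable def potentialCorrection (m : ℕ) : ℝ :=
  if m ≤ 1 then 2 else 3 / (2 * ((m : ℝ) - 1)) + 1 / m

noncomputable def boxPotential (a : ℝ) (m : ℕ) : ℝ :=
  (a - 1) * harmonic (m - 2) + a * potentialCorrection m

lemma boxPotential_one (a : ℝ) : boxPotential a 1 = 2 * a := by
  simp [boxPotential, potentialCorrection, mul_comm]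

lemma boxPotential_two (a : ℝ) : boxPotential a 2 = 2 * a := by
  norm_num [boxPotential, potentialCorrection, mul_comm]

lemma boxPotential_add_two (a : ℝ) (t : ℕ) :
    boxPotential a (t + 2) = (a - 1) * harmonic t + a * (3 / (2 * (t + 1)) + 1 / (t + 2)) := by
  simp only [boxPotential, potentialCorrection, Nat.add_sub_cancel, if_neg (by omega : ¬t + 2 ≤ 1)]
  push_cast
  ring_nf

lemma boxPotential_add_three_le_add_two {a b : ℝ} (ha : 0 ≤ a) (hab : 2 * a ≤ b) (t : ℕ) :
    boxPotential a (t + 3) ≤ boxPotential a (t + 2) + b / (t + 3) - 1 / (t + 2) := by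
  have hb : 2 * a / (t + 3) ≤ b / (t + 3) := by gcongr
  have key : (a - 1) * ((t : ℝ) + 1)⁻¹ + a * (3 / (2 * (t + 2)) + 1 / (t + 3)) + 1 / (t + 2) ≤
      a * (3 / (2 * (t + 1)) + 1 / (t + 2)) + 2 * a / (t + 3) := by
    rw [← sub_nonneg]
    field_simp
    ring_nf
    positivity
  rw [show t + 3 = (t + 1) + 2 by ring, boxPotential_add_two, boxPotential_add_two, harmonic_succ]
  push_cast
  ring_nf at key hb ⊢
  linarith

lemma boxPotential_add_three_le_add_one {a b : ℝ} (ha : 2 ≤ a) (hab : 2 * a ≤ b) (t : ℕ) :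
    boxPotential a (t + 3) ≤ boxPotential a (t + 1) + b / (t + 3) - 2 / (t + 1) := by
  rcases t with _ | t
  · rw [boxPotential_one, show 0 + 3 = 1 + 2 by rfl, boxPotential_add_two]
    norm_num
    linarith
  have hb : 2 * a / (t + 4) ≤ b / (t + 4) := by gcongr
  have key : (a - 1) * (((t : ℝ) + 1)⁻¹ + ((t : ℝ) + 2)⁻¹) +
      a * (3 / (2 * (t + 3)) + 1 / (t + 4)) + 2 / (t + 2) ≤
      a * (3 / (2 * (t + 1)) + 1 / (t + 2)) + 2 * a / (t + 4) := by
    rw [← sub_nonneg]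
    field_simp
    ring_nf
    positivity
  rw [show t + 1 + 3 = (t + 2) + 2 by ring, show t + 1 + 1 = t + 2 by ring, boxPotential_add_two,
    boxPotential_add_two, harmonic_succ, harmonic_succ]
  push_cast
  ring_nf at key hb ⊢
  linarith

lemma boxPotential_le_sub {a b : ℝ} (ha : 2 ≤ a) (hab : 2 * a ≤ b) {j d : ℕ} (hj : 3 ≤ j)
    (hd : d ≤ 2) : boxPotential a j ≤ boxPotential a (j - d) + b / j - d / (j - d : ℕ) := by
  obtain ⟨t, rfl⟩ : ∃ t, j = t + 3 := ⟨j - 3, by omega⟩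
  interval_cases d
  · have : 0 ≤ b / (t + 3 : ℕ) := by apply div_nonneg <;> linarith
    simp only [Nat.sub_zero, CharP.cast_eq_zero, zero_div, sub_zero]
    linarith
  · have := boxPotential_add_three_le_add_two (by linarith) hab t
    rw [show t + 3 - 1 = t + 2 by omega]
    push_cast
    linarith
  · have := boxPotential_add_three_le_add_one ha hab t
    rw [show t + 3 - 2 = t + 1 by omega]
    push_cast
    linarith

lemma total_le_boxPotential_sub {a b : ℝ} (ha : 2 ≤ a) (hab : 2 * a ≤ b) {j d q p : ℕ}
    (hj : 3 ≤ j) (hd : d ≤ 2) (hp : p < j) (htotal : (j * q + p : ℝ) + b ≤ j * boxPotential a j) :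
    ((j - d : ℕ) : ℝ) * q + p ≤ (j - d : ℕ) * boxPotential a (j - d) := by
  set e : ℝ := ((j - d : ℕ) : ℝ) with he
  have hj₀ : (0 : ℝ) < j := by positivity
  have he₀ : 0 < e := by rw [he]; exact_mod_cast (by omega : 0 < j - d)
  have hje : (j : ℝ) = e + d := by rw [he, Nat.cast_sub (by omega)]; ring
  have hpj : (p : ℝ) ≤ j := by exact_mod_cast hp.le
  have hstep : e * boxPotential a j ≤ e * boxPotential a (j - d) + e * b / j - d := by
    have := mul_le_mul_of_nonneg_left (boxPotential_le_sub ha hab hj hd) he₀.le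
    rwa [mul_sub, mul_add, mul_div_assoc', mul_div_cancel₀ _ he₀.ne'] at this
  refine le_of_mul_le_mul_left ?_ hj₀
  calc (j : ℝ) * (e * q + p) = e * (j * q + p) + d * p := by rw [hje]; ring
    _ ≤ e * (j * boxPotential a j - b) + d * p := by gcongr; linarith
    _ = j * (e * boxPotential a j) - e * b + d * p := by ring
    _ ≤ j * (e * boxPotential a (j - d) + e * b / j - d) - e * b + d * p := by gcongr
    _ = j * (e * boxPotential a (j - d)) - d * (j - p) := by field_simp; ring
    _ ≤ j * (e * boxPotential a (j - d)) :=
      sub_le_self _ (mul_nonneg (Nat.cast_nonneg d) (sub_nonneg.mpr hpj))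

lemma potentialCorrection_nonneg (m : ℕ) : 0 ≤ potentialCorrection m := by
  unfold potentialCorrection
  split_ifs with hm
  · norm_num
  · have : (1 : ℝ) < m := by exact_mod_cast (by omega : 1 < m)
    have : (0 : ℝ) < m - 1 := by linarith
    positivity

lemma mul_harmonic_le_boxPotential {a : ℝ} (ha : 0 ≤ a) (m : ℕ) :
    (a - 1) * harmonic (m - 2) ≤ boxPotential a m :=
  le_add_of_nonneg_right (mul_nonneg ha (potentialCorrection_nonneg m))

section Boxes

variable {ι α : Type*} [DecidableEq α]

lemma exists_claim_card_sdiff_le (f : ι → Finset α) (J : Finset ι) (M : Finset α) (w : ι → ℕ) :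
    ∃ m₀ ⊆ J.biUnion (fun i => f i \ M), m₀.card ≤ ∑ i ∈ J, ((f i \ M).card - w i) ∧
      ∀ m, m₀ ⊆ m → ∀ i ∈ J, (f i \ (M ∪ m)).card ≤ w i := by
  choose S hS hScard using fun i => Finset.exists_subset_card_eq (Nat.sub_le (f i \ M).card (w i))
  refine ⟨J.biUnion S, Finset.biUnion_subset_iff_forall_subset.mpr fun i hi =>
    (hS i).trans (Finset.subset_biUnion_of_mem (fun i => f i \ M) hi), ?_, fun m hm i hi => ?_⟩
  · exact Finset.card_biUnion_le.trans (Finset.sum_le_sum fun i _ => (hScard i).le)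
  · have hsub : f i \ (M ∪ m) ⊆ (f i \ M) \ S i := by
      intro x hx
      simp only [Finset.mem_sdiff, Finset.mem_union, not_or] at hx ⊢
      exact ⟨⟨hx.1, hx.2.1⟩, fun hxS => hx.2.2 (hm (Finset.mem_biUnion.mpr ⟨i, hi, hxS⟩))⟩
    calc _ ≤ ((f i \ M) \ S i).card := Finset.card_le_card hsub
      _ = (f i \ M).card - (S i).card := Finset.card_sdiff_of_subset (hS i)
      _ ≤ w i := by rw [hScard]; omega

lemma card_filter_not_disjoint_le {f : ι → Finset α} (hf : Pairwise (Function.onFun Disjoint f))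
    (J : Finset ι) (X : Finset α) : {i ∈ J | ¬Disjoint (f i) X}.card ≤ X.card := by
  calc _ ≤ ({i ∈ J | ¬Disjoint (f i) X}.biUnion fun i => f i ∩ X).card :=
        Finset.card_le_card_biUnion
          (fun i _ i' _ hii' => (hf hii').mono Finset.inter_subset_left Finset.inter_subset_left)
          (fun i hi => Finset.not_disjoint_iff_nonempty_inter.mp (Finset.mem_filter.mp hi).2)
    _ ≤ X.card := Finset.card_le_card
        (Finset.biUnion_subset_iff_forall_subset.mpr fun i _ => Finset.inter_subset_right)

variable [DecidableEq ι]

def balancedNeed (q : ℕ) (P : Finset ι) (i : ι) : ℕ := q + if i ∈ P then 1 else 0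

lemma sum_balancedNeed {J P : Finset ι} (hP : P ⊆ J) (q : ℕ) :
    ∑ i ∈ J, balancedNeed q P i = J.card * q + P.card := by
  simp only [balancedNeed, Finset.sum_add_distrib, Finset.sum_const, smul_eq_mul,
    Finset.sum_ite_mem, Finset.inter_eq_right.mpr hP, mul_one]

lemma exists_balancedNeed_le {J P : Finset ι} {q r : ℕ} (hP : P ⊆ J) (hJ : J.Nonempty)
    (hr₀ : 0 < r) (hr : r ≤ J.card * q + P.card) :
    ∃ q' P', P' ⊆ J ∧ P'.card < J.card ∧ J.card * q' + P'.card + r = J.card * q + P.card ∧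
      ∀ i, balancedNeed q' P' i ≤ balancedNeed q P i := by
  set j := J.card
  have hj : 0 < j := hJ.card_pos
  have hPj : P.card ≤ j := Finset.card_le_card hP
  obtain ⟨q', p', hdiv, hp'⟩ : ∃ q' p', j * q' + p' = j * q + P.card - r ∧ p' < j :=
    ⟨_, _, Nat.div_add_mod _ _, Nat.mod_lt _ hj⟩
  have hq' : q' ≤ q := by
    by_contra! h
    have := Nat.mul_le_mul_left j h
    rw [Nat.mul_succ] at this
    omega
  rcases hq'.eq_or_lt with rfl | hlt
  · obtain ⟨P', hP'P, hP'card⟩ := Finset.exists_subset_card_eq (show p' ≤ P.card by omega)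
    refine ⟨q', P', hP'P.trans hP, by omega, by omega, fun i => ?_⟩
    unfold balancedNeed
    split_ifs with h₁ h₂ <;> first | omega | exact absurd (hP'P h₁) h₂
  · obtain ⟨P', hP'J, hP'card⟩ := Finset.exists_subset_card_eq (show p' ≤ j by omega)
    refine ⟨q', P', hP'J, by omega, by omega, fun i => ?_⟩
    unfold balancedNeed
    split_ifs <;> omega

structure BoxInvariant (boxes : ι → Finset α) (a : ℝ) (M B : Finset α) (J P : Finset ι) (q : ℕ) :
    Prop where
  nonempty : J.Nonempty
  subset : P ⊆ J
  disjoint : ∀ i ∈ J, Disjoint (boxes i) B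
  card_sdiff_le : ∀ i ∈ J, (boxes i \ M).card ≤ balancedNeed q P i
  total_le : ((J.card * q + P.card : ℕ) : ℝ) ≤ J.card * boxPotential a J.card

namespace BoxInvariant

variable {boxes : ι → Finset α} {a : ℝ} {M B : Finset α} {J P : Finset ι} {q b : ℕ}

lemma sdiff_subset {board : Finset α} (h : BoxInvariant boxes a M B J P q)
    (hboard : ∀ i, boxes i ⊆ board) {i : ι} (hi : i ∈ J) : boxes i \ M ⊆ board \ (M ∪ B) :=
  sdiff_subset_sdiff_union_of_disjoint (hboard i) (h.disjoint i hi)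

lemma lt_boxPotential (h : BoxInvariant boxes a M B J P q)
    (hb : ∀ i ∈ J, b < (boxes i \ M).card) : (b : ℝ) < boxPotential a J.card := by
  have hsum : J.card * (b + 1) ≤ J.card * q + P.card := by
    rw [← sum_balancedNeed h.subset, ← smul_eq_mul]
    exact Finset.card_nsmul_le_sum J (balancedNeed q P) (b + 1) fun i hi =>
      (hb i hi).trans_le (h.card_sdiff_le i hi)
  have hj : (0 : ℝ) < J.card := by exact_mod_cast h.nonempty.card_pos
  have : (J.card : ℝ) * (b + 1) ≤ J.card * boxPotential a J.card :=
    le_trans (by exact_mod_cast hsum) h.total_le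
  have := le_of_mul_le_mul_left this hj
  linarith

lemma three_le_card (h : BoxInvariant boxes a M B J P q) (hab : 2 * a ≤ b)
    (hb : ∀ i ∈ J, b < (boxes i \ M).card) : 3 ≤ J.card := by
  have hlt := h.lt_boxPotential hb
  have hj := h.nonempty.card_pos
  by_contra! h3
  interval_cases J.card
  · rw [boxPotential_one] at hlt; linarith
  · rw [boxPotential_two] at hlt; linarith

lemma exists_maker_move {board : Finset α} (h : BoxInvariant boxes a M B J P q)
    (hboard : ∀ i, boxes i ⊆ board) (hb₀ : 0 < b) (hb : ∀ i ∈ J, b < (boxes i \ M).card) :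
    ∃ q' P', P' ⊆ J ∧ P'.card < J.card ∧
      ((J.card * q' + P'.card + b : ℕ) : ℝ) ≤ J.card * boxPotential a J.card ∧
      ∃ m₀ ⊆ board \ (M ∪ B), m₀.card ≤ b ∧
        ∀ m, m₀ ⊆ m → ∀ i ∈ J, (boxes i \ (M ∪ m)).card ≤ balancedNeed q' P' i := by
  obtain ⟨i₀, hi₀⟩ := h.nonempty
  have hbT : b ≤ J.card * q + P.card := by
    rw [← sum_balancedNeed h.subset]
    exact (hb i₀ hi₀).le.trans ((h.card_sdiff_le i₀ hi₀).trans
      (Finset.single_le_sum (fun _ _ => Nat.zero_le _) hi₀))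
  obtain ⟨q', P', hP'J, hP'card, htotal, hle⟩ :=
    exists_balancedNeed_le h.subset h.nonempty hb₀ hbT
  obtain ⟨m₀, hm₀, hm₀card, hneed⟩ := exists_claim_card_sdiff_le boxes J M (balancedNeed q' P')
  refine ⟨q', P', hP'J, hP'card, htotal ▸ h.total_le, m₀,
    hm₀.trans (Finset.biUnion_subset_iff_forall_subset.mpr fun i hi => h.sdiff_subset hboard hi),
    ?_, hneed⟩
  calc m₀.card ≤ ∑ i ∈ J, ((boxes i \ M).card - balancedNeed q' P' i) := hm₀card
    _ ≤ ∑ i ∈ J, (balancedNeed q P i - balancedNeed q' P' i) :=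
      Finset.sum_le_sum fun i hi => Nat.sub_le_sub_right (h.card_sdiff_le i hi) _
    _ = b := by
      rw [Finset.sum_tsub_distrib _ fun i _ => hle i, sum_balancedNeed h.subset,
        sum_balancedNeed hP'J]
      omega

lemma of_breaker_move (hdisj : Pairwise (Function.onFun Disjoint boxes)) (ha : 2 ≤ a)
    (hab : 2 * a ≤ b) (hJ : 3 ≤ J.card)
    (hPcard : P.card < J.card) (hB : ∀ i ∈ J, Disjoint (boxes i) B)
    (hM : ∀ i ∈ J, (boxes i \ M).card ≤ balancedNeed q P i)
    (htotal : ((J.card * q + P.card + b : ℕ) : ℝ) ≤ J.card * boxPotential a J.card)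
    {m' : Finset α} (hm' : m'.card ≤ 2) :
    BoxInvariant boxes a M (B ∪ m') {i ∈ J | Disjoint (boxes i) m'}
      (P ∩ {i ∈ J | Disjoint (boxes i) m'}) q := by
  set J' := {i ∈ J | Disjoint (boxes i) m'}
  have hsplit : J'.card + {i ∈ J | ¬Disjoint (boxes i) m'}.card = J.card :=
    Finset.card_filter_add_card_filter_not _
  have hkilled := card_filter_not_disjoint_le hdisj J m'
  obtain ⟨d, hd, hJ'⟩ : ∃ d ≤ 2, J'.card = J.card - d :=
    ⟨J.card - J'.card, by omega, by omega⟩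
  have hmem : ∀ i ∈ J', i ∈ J ∧ Disjoint (boxes i) m' := fun i hi => Finset.mem_filter.mp hi
  refine ⟨Finset.card_pos.mp (by omega), Finset.inter_subset_right,
    fun i hi => Finset.disjoint_union_right.mpr ⟨hB i (hmem i hi).1, (hmem i hi).2⟩,
    fun i hi => ?_, ?_⟩
  · simpa [balancedNeed, hi] using hM i (hmem i hi).1
  · have hbound := total_le_boxPotential_sub ha hab hJ hd hPcard
      (by push_cast at htotal ⊢; linarith)
    rw [← hJ'] at hbound
    have : (P ∩ J').card ≤ P.card := Finset.card_le_card Finset.inter_subset_left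
    calc _ ≤ (J'.card : ℝ) * q + P.card := by push_cast; gcongr
      _ ≤ _ := hbound

theorem mWin {board : Finset α} {F : Set (Finset α)} (h : BoxInvariant boxes a M B J P q)
    (hboard : ∀ i, boxes i ⊆ board) (hF : ∀ i, boxes i ∈ F)
    (hdisj : Pairwise (Function.onFun Disjoint boxes)) (ha : 2 ≤ a) (hab : 2 * a ≤ b) :
    MWin board F b 2 true M B := by
  have hb₀ : 0 < b := by exact_mod_cast (by linarith : (0 : ℝ) < b)
  refine MWin.of_invariant (fun M B => ∃ J P q, BoxInvariant boxes a M B J P q) hb₀ ?_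
    ⟨J, P, q, h⟩
  rintro M B ⟨J, P, q, h⟩
  by_cases hwin : ∃ i ∈ J, (boxes i \ M).card ≤ b
  · obtain ⟨i, hi, hcard⟩ := hwin
    exact Or.inl (MWin.of_card_sdiff_le (hF i) (hboard i) (h.disjoint i hi) hcard)
  push Not at hwin
  obtain ⟨q', P', hP'J, hP'card, htotal, m₀, hm₀, hm₀card, hneed⟩ :=
    h.exists_maker_move hboard hb₀ hwin
  obtain ⟨i₀, hi₀⟩ := h.nonempty
  refine Or.inr ⟨?_, m₀, hm₀, hm₀card, fun m hm₀m _ m' _ hm' => ⟨_, _, q',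
    of_breaker_move hdisj ha hab (h.three_le_card hab hwin) hP'card h.disjoint
      (hneed m hm₀m) htotal hm'⟩⟩
  exact (Finset.card_pos.mp (by have := hwin i₀ hi₀; omega)).mono (h.sdiff_subset hboard hi₀)

end BoxInvariant

end Boxes

theorem stmt10_general (b k s : ℕ)
    (α : Type) [DecidableEq α] (boxes : Fin (k + 1) → Finset α)
    (hdisj : Pairwise (Function.onFun Disjoint boxes))
    (hcard : ∀ i, (boxes i).card ≤ s)
    (hs : (s : ℝ) ≤ ((b / 2 : ℕ) - 1 : ℝ) * ∑ i ∈ Finset.Icc 1 (k - 1), (1 : ℝ) / i) :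
    MWin (Finset.univ.biUnion boxes) {S | ∃ i, S = boxes i} b 2 true ∅ ∅ := by
  obtain rfl | hs₀ := Nat.eq_zero_or_pos s
  · exact MWin.win true ∅ ∅ (boxes 0) ⟨0, rfl⟩ (by simpa using hcard 0)
  have hsum : ∑ i ∈ Finset.Icc 1 (k - 1), (1 : ℝ) / i = harmonic (k + 1 - 2) := by
    simp [harmonic_eq_sum_Icc]
  rw [hsum] at hs
  have ha : (2 : ℝ) ≤ (b / 2 : ℕ) := by
    by_contra! ha
    have hb : ((b / 2 : ℕ) : ℝ) ≤ 1 := by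
      have : b / 2 < 2 := by exact_mod_cast ha
      exact_mod_cast (by omega : b / 2 ≤ 1)
    have : (s : ℝ) ≤ 0 :=
      hs.trans (mul_nonpos_of_nonpos_of_nonneg (by linarith) (by simp [harmonic]; positivity))
    have : (1 : ℝ) ≤ s := by exact_mod_cast hs₀
    linarith
  have hab : 2 * ((b / 2 : ℕ) : ℝ) ≤ b := by exact_mod_cast Nat.mul_div_le b 2
  have hinit : BoxInvariant boxes (b / 2 : ℕ) ∅ ∅ Finset.univ ∅ s := by
    refine ⟨Finset.univ_nonempty, Finset.empty_subset _, fun i _ => Finset.disjoint_empty_right _,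
      fun i _ => by simpa [balancedNeed] using hcard i, ?_⟩
    simp only [Finset.card_univ, Fintype.card_fin, Finset.card_empty, add_zero, Nat.cast_mul]
    exact mul_le_mul_of_nonneg_left (hs.trans (mul_harmonic_le_boxPotential (by linarith) _))
      (by positivity)
  exact hinit.mWin (fun i => Finset.subset_biUnion_of_mem boxes (Finset.mem_univ i))
    (fun i => ⟨i, rfl⟩ : ∀ i, boxes i ∈ {S | ∃ i, S = boxes i}) hdisj ha hab

/-- If the Chvátal–Erdős criterion holds for the `(b : 1)` game with `k` pairwise
disjoint boxes of size `s` (Maker wins whenever `s ≤ (b-1)∑_{i=1}^{k-1} 1/i`),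
then in the `(b : 2)` game with `k + 1` pairwise disjoint boxes of size at most
`s`, Maker wins whenever `s ≤ (⌊b/2⌋ - 1)∑_{i=1}^{k-1} 1/i`. -/
theorem stmt10 (b k s : ℕ)
    (H : ∀ (α : Type) [DecidableEq α] (boxes : Fin k → Finset α),
      Pairwise (Function.onFun Disjoint boxes) →
      (∀ i, (boxes i).card = s) →
      ((s : ℝ) ≤ ((b : ℝ) - 1) * ∑ i ∈ Finset.Icc 1 (k - 1), (1 : ℝ) / i) →
      MWin (Finset.univ.biUnion boxes) {S | ∃ i, S = boxes i} b 1 true ∅ ∅)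
    (α : Type) [DecidableEq α] (boxes : Fin (k + 1) → Finset α)
    (hdisj : Pairwise (Function.onFun Disjoint boxes))
    (hcard : ∀ i, (boxes i).card ≤ s)
    (hs : (s : ℝ) ≤ ((b / 2 : ℕ) - 1 : ℝ) * ∑ i ∈ Finset.Icc 1 (k - 1), (1 : ℝ) / i) :
    MWin (Finset.univ.biUnion boxes) {S | ∃ i, S = boxes i} b 2 true ∅ ∅ :=
  stmt10_general b k s α boxes hdisj hcard hs
end

section
/- For $b_0 = \frac{\log 2}{2}\cdot\frac{n}{\log n}$, the sum $\sum_{k=1}^{\lfloor n/2\rfloor} \binom{n}{k} 2^{-k(n-k)/b_0}$ tends to $0$ as $n\to\infty$. -/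
open Filter Topology

/-! With `b₀ = (log 2 / 2) · n / log n` the weight `2^{-k(n-k)/b₀}` equals `n^{-2k(n-k)/n}`.
For `k ≤ n/4` the exponent is at least `3k/2`, and `C(n,k) ≤ n^k` bounds the `k`-th term by
`n^{-k/2}`; these terms form a geometric series with ratio `n^{-1/2} → 0`. For `n/4 ≤ k ≤ n/2`
the exponent is at least `k ≥ n/4`, and `C(n,k) ≤ 2^n` bounds the term by `2^n n^{-n/4} ≤ 2^{-n}`,
so these at most `n` terms contribute at most `n 2^{-n} → 0`. -/

lemma two_rpow_neg_div_eq_rpow {n : ℝ} (hn : 1 < n) (x : ℝ) :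
    (2 : ℝ) ^ (-x / (Real.log 2 / 2 * (n / Real.log n))) = n ^ (-(2 * x / n)) := by
  have hlogn : Real.log n ≠ 0 := (Real.log_pos hn).ne'
  have hlog2 : Real.log 2 ≠ 0 := (Real.log_pos one_lt_two).ne'
  rw [Real.rpow_def_of_pos two_pos, Real.rpow_def_of_pos (zero_lt_one.trans hn)]
  field_simp

lemma four_pow_le_pow_of_le_four_mul {n k : ℕ} (hn : 256 ≤ n) (hk : n ≤ 4 * k) :
    4 ^ n ≤ n ^ k := by
  rw [← Nat.pow_le_pow_iff_left four_ne_zero, ← pow_mul, ← pow_mul, mul_comm k,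
    mul_comm n, pow_mul]
  calc (4 ^ 4) ^ n ≤ n ^ n := Nat.pow_le_pow_left hn n
    _ ≤ n ^ (4 * k) := Nat.pow_le_pow_right (by omega) hk

section CutTerm

variable {n k : ℕ}

lemma choose_mul_rpow_le_of_four_mul_le (hn : 0 < n) (hk : 4 * k ≤ n) :
    (n.choose k : ℝ) * (n : ℝ) ^ (-(2 * ((k * (n - k) : ℕ) : ℝ) / n))
      ≤ ((n : ℝ) ^ (-(1 / 2) : ℝ)) ^ k := by
  have hn' : (0 : ℝ) < n := by exact_mod_cast hn
  have hexp : 3 / 2 * (k : ℝ) ≤ 2 * ((k * (n - k) : ℕ) : ℝ) / n := by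
    have : 3 * k * n ≤ 4 * (k * (n - k)) := by
      have := Nat.mul_le_mul_left k (show 3 * n ≤ 4 * (n - k) by omega)
      linarith
    rw [le_div_iff₀ hn']
    have : (3 * k * n : ℝ) ≤ 4 * ((k * (n - k) : ℕ) : ℝ) := by exact_mod_cast this
    linarith
  calc (n.choose k : ℝ) * (n : ℝ) ^ (-(2 * ((k * (n - k) : ℕ) : ℝ) / n))
      ≤ (n : ℝ) ^ k * (n : ℝ) ^ (-(3 / 2 * (k : ℝ))) := by
        gcongr
        · exact_mod_cast Nat.choose_le_pow n k
        · exact_mod_cast hn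
    _ = ((n : ℝ) ^ (-(1 / 2) : ℝ)) ^ k := by
        rw [← Real.rpow_natCast, ← Real.rpow_add hn', ← Real.rpow_natCast,
          ← Real.rpow_mul hn'.le]
        ring_nf

lemma choose_mul_rpow_le_of_le_four_mul (hn : 256 ≤ n) (h2k : 2 * k ≤ n) (h4k : n ≤ 4 * k) :
    (n.choose k : ℝ) * (n : ℝ) ^ (-(2 * ((k * (n - k) : ℕ) : ℝ) / n)) ≤ (1 / 2 : ℝ) ^ n := by
  have hn' : (0 : ℝ) < n := by positivity
  have hexp : (k : ℝ) ≤ 2 * ((k * (n - k) : ℕ) : ℝ) / n := by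
    have : k * n ≤ 2 * (k * (n - k)) := by
      have := Nat.mul_le_mul_left k (show n ≤ 2 * (n - k) by omega)
      linarith
    rw [le_div_iff₀ hn']
    have : (k * n : ℝ) ≤ 2 * ((k * (n - k) : ℕ) : ℝ) := by exact_mod_cast this
    linarith
  have hpow : ((4 : ℝ) ^ n) ≤ (n : ℝ) ^ k := by
    exact_mod_cast four_pow_le_pow_of_le_four_mul hn h4k
  calc (n.choose k : ℝ) * (n : ℝ) ^ (-(2 * ((k * (n - k) : ℕ) : ℝ) / n))
      ≤ 2 ^ n * (n : ℝ) ^ (-(k : ℝ)) := by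
        gcongr
        · exact_mod_cast Nat.choose_le_two_pow n k
        · exact_mod_cast (by omega : 1 ≤ n)
    _ = 2 ^ n / (n : ℝ) ^ k := by rw [Real.rpow_neg hn'.le, Real.rpow_natCast, div_eq_mul_inv]
    _ ≤ 2 ^ n / 4 ^ n := by gcongr
    _ = (1 / 2 : ℝ) ^ n := by
        rw [show (4 : ℝ) = 2 * 2 by norm_num, mul_pow, div_mul_cancel_left₀ (by positivity),
          one_div, inv_pow]

lemma choose_mul_rpow_le (hn : 256 ≤ n) (hk : k ≤ n / 2) :
    (n.choose k : ℝ) * (n : ℝ) ^ (-(2 * ((k * (n - k) : ℕ) : ℝ) / n))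
      ≤ ((n : ℝ) ^ (-(1 / 2) : ℝ)) ^ k + (1 / 2 : ℝ) ^ n := by
  rcases le_total (4 * k) n with h4k | h4k
  · have := choose_mul_rpow_le_of_four_mul_le (by omega) h4k
    linarith [pow_nonneg (by norm_num : (0 : ℝ) ≤ 1 / 2) n]
  · have := choose_mul_rpow_le_of_le_four_mul hn (by omega) h4k
    linarith [pow_nonneg (Real.rpow_nonneg (Nat.cast_nonneg n) (-(1 / 2) : ℝ)) k]

end CutTerm

lemma sum_Icc_one_pow_le {r : ℝ} (hr₀ : 0 ≤ r) (hr₁ : r < 1) (m : ℕ) :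
    ∑ k ∈ Finset.Icc 1 m, r ^ k ≤ r / (1 - r) := by
  rw [← Finset.Ico_add_one_right_eq_Icc]
  simpa using geom_sum_Ico_le_of_lt_one (m := 1) (n := m + 1) hr₀ hr₁

lemma cutPotential_le {n : ℕ} (hn : 256 ≤ n) :
    ∑ k ∈ Finset.Icc 1 (n / 2), (n.choose k : ℝ) *
        (2 : ℝ) ^ (-((k * (n - k) : ℕ) : ℝ) / (Real.log 2 / 2 * ((n : ℝ) / Real.log n)))
      ≤ (n : ℝ) ^ (-(1 / 2) : ℝ) / (1 - (n : ℝ) ^ (-(1 / 2) : ℝ)) + n * (1 / 2 : ℝ) ^ n := by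
  have hn1 : (1 : ℝ) < n := by exact_mod_cast (by omega : 1 < n)
  have hr₁ : (n : ℝ) ^ (-(1 / 2) : ℝ) < 1 := Real.rpow_lt_one_of_one_lt_of_neg hn1 (by norm_num)
  calc _ ≤ ∑ k ∈ Finset.Icc 1 (n / 2), (((n : ℝ) ^ (-(1 / 2) : ℝ)) ^ k + (1 / 2 : ℝ) ^ n) := by
        refine Finset.sum_le_sum fun k hk => ?_
        rw [two_rpow_neg_div_eq_rpow hn1]
        exact choose_mul_rpow_le hn (Finset.mem_Icc.mp hk).2
    _ = ∑ k ∈ Finset.Icc 1 (n / 2), ((n : ℝ) ^ (-(1 / 2) : ℝ)) ^ k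
          + (n / 2 : ℕ) * (1 / 2 : ℝ) ^ n := by
        rw [Finset.sum_add_distrib, Finset.sum_const, Nat.card_Icc, nsmul_eq_mul,
          Nat.add_sub_cancel]
    _ ≤ _ := by
        gcongr
        · exact sum_Icc_one_pow_le (by positivity) hr₁ _
        · exact_mod_cast Nat.div_le_self n 2

/-- For `b₀ = (log 2 / 2) · n / log n`, the Erdős–Selfridge potential of the family
of edge-cuts of `K_n`, `∑_{k=1}^{⌊n/2⌋} C(n,k) 2^{-k(n-k)/b₀}`, tends to `0`. -/
theorem stmt11 :
    Tendsto (fun n : ℕ => ∑ k ∈ Finset.Icc 1 (n / 2),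
      (n.choose k : ℝ) *
        (2 : ℝ) ^ (-((k * (n - k) : ℕ) : ℝ) / (Real.log 2 / 2 * ((n : ℝ) / Real.log n))))
      atTop (nhds 0) := by
  have hr : Tendsto (fun n : ℕ => (n : ℝ) ^ (-(1 / 2) : ℝ)) atTop (𝓝 0) :=
    (tendsto_rpow_neg_atTop (by norm_num)).comp tendsto_natCast_atTop_atTop
  have hgeom : Tendsto (fun n : ℕ => (n : ℝ) ^ (-(1 / 2) : ℝ) / (1 - (n : ℝ) ^ (-(1 / 2) : ℝ)))
      atTop (𝓝 0) := by
    have := hr.div (tendsto_const_nhds.sub hr) (by norm_num : (1 : ℝ) - 0 ≠ 0)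
    rwa [zero_div] at this
  have hdecay : Tendsto (fun n : ℕ => (n : ℝ) * (1 / 2 : ℝ) ^ n) atTop (𝓝 0) := by
    simpa using tendsto_pow_const_mul_const_pow_of_lt_one 1 (r := 1 / 2) (by norm_num) (by norm_num)
  refine squeeze_zero' (Eventually.of_forall fun n => Finset.sum_nonneg fun k _ => ?_)
    ((eventually_ge_atTop 256).mono fun n hn => cutPotential_le hn) (by simpa using hgeom.add hdecay)
  exact mul_nonneg (Nat.cast_nonneg _) (Real.rpow_nonneg zero_le_two _)
end

section
/- Let $k=\lfloor\sqrt n/2\rfloor$ and $b'=\frac{\log 2}{2}\cdot\frac{\sqrt n}{\log n}$. Then $\sum_{i=1}^{\lfloor (n-k)/2\rfloor} \binom{n}{i}\binom{n-i}{k} 2^{-i(n-i-k)/b'} \to 0$ as $n\to\infty$. -/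
open Filter Topology

/-!
Since `2 ^ (-1 / b') = n ^ (-2 / √n)`, the `i`-th term is at most `n ^ (i + k) · n ^ (-2i(n-i-k)/√n)`.
As `i ≤ (n - k)/2` and `k ≤ √n/2`, the cut has at least `i(n - √n/2)/2` edges, which pushes the
exponent below `3/2 - √n/2`. There are at most `n` terms, so the sum is at most `n ^ (5/2 - √n/2)`,
which is `≤ 1/n` once `√n ≥ 7`.
-/

open Real

/-- The `i`-th summand: `C(n,i)·C(n-i,k)` choices of `(V₁, V₀)`, each cut having `i(n-i-k)` edges. -/
noncomputable def cutPotentialTerm (n k i : ℕ) : ℝ :=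
  (n.choose i : ℝ) * ((n - i).choose k : ℝ) *
    (2 : ℝ) ^ (-((i * (n - i - k) : ℕ) : ℝ) / (log 2 / 2 * (√n / log n)))

lemma rpow_div_log_mul_div_log {a b : ℝ} (ha : 0 < a) (hb : 0 < b) (hlogb : log b ≠ 0)
    (x c : ℝ) : b ^ (x / (log b * (c / log a))) = a ^ (x / c) := by
  rw [rpow_def_of_pos hb, rpow_def_of_pos ha]
  congr 1
  by_cases hloga : log a = 0
  · simp [hloga]
  by_cases hc : c = 0
  · simp [hc]
  field_simp

lemma choose_mul_choose_le_pow (n i k : ℕ) : n.choose i * (n - i).choose k ≤ n ^ (i + k) := by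
  rw [pow_add]
  exact Nat.mul_le_mul (Nat.choose_le_pow n i)
    ((Nat.choose_le_pow _ k).trans (Nat.pow_le_pow_left (Nat.sub_le n i) k))

lemma cut_exponent_le {n s i k : ℝ} (hs : 3 / 2 ≤ s) (hsn : s * s = n) (hi : 1 ≤ i)
    (hik : 2 * i + k ≤ n) (hk : k ≤ s / 2) :
    i + k - 2 * (i * (n - i - k)) / s ≤ 3 / 2 - s / 2 := by
  have hs0 : 0 < s := by linarith
  suffices (i + k - (3 / 2 - s / 2)) * s ≤ 2 * (i * (n - i - k)) by
    rw [← le_div_iff₀ hs0] at this; linarith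
  nlinarith [mul_nonneg (sub_nonneg.2 hi) (by nlinarith : (0:ℝ) ≤ s * s - 3 * s / 2),
    mul_le_mul_of_nonneg_left hik (by linarith : (0:ℝ) ≤ i),
    mul_le_mul_of_nonneg_left hk (by linarith : (0:ℝ) ≤ i)]

lemma cutPotentialTerm_le {n k i : ℕ} (hn : 3 ≤ n) (hk : (k : ℝ) ≤ √n / 2) (hi : 1 ≤ i)
    (hik : 2 * i + k ≤ n) : cutPotentialTerm n k i ≤ (n : ℝ) ^ (3 / 2 - √n / 2) := by
  have hn0 : (0 : ℝ) < n := by positivity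
  have hn1 : (1 : ℝ) ≤ n := by exact_mod_cast (by omega : 1 ≤ n)
  have hs : 3 / 2 ≤ √n := by
    rw [le_sqrt (by norm_num) hn0.le]
    have : (3 : ℝ) ≤ n := by exact_mod_cast hn
    linarith
  have hcut : (((i * (n - i - k) : ℕ)) : ℝ) = i * (n - i - k) := by
    rw [Nat.cast_mul, Nat.sub_sub, Nat.cast_sub (by omega)]; push_cast; ring
  have hpow : (2 : ℝ) ^ (-((i * (n - i - k) : ℕ) : ℝ) / (log 2 / 2 * (√n / log n)))
      = (n : ℝ) ^ (-(2 * (i * (n - i - k))) / √n) := by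
    rw [hcut, ← rpow_div_log_mul_div_log hn0 two_pos (log_pos one_lt_two).ne']
    congr 1
    field_simp
  have hchoose : (n.choose i : ℝ) * ((n - i).choose k : ℝ) ≤ (n : ℝ) ^ ((i : ℝ) + k) := by
    rw [← Nat.cast_add, rpow_natCast]
    exact_mod_cast choose_mul_choose_le_pow n i k
  calc cutPotentialTerm n k i ≤ (n : ℝ) ^ ((i : ℝ) + k) * (n : ℝ) ^ (-(2 * (i * (n - i - k))) / √n) := by
        rw [cutPotentialTerm, hpow]; gcongr
    _ = (n : ℝ) ^ (i + k - 2 * (i * (n - i - k)) / √n) := by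
        rw [← rpow_add hn0, neg_div, ← sub_eq_add_neg]
    _ ≤ (n : ℝ) ^ (3 / 2 - √n / 2) := by
        refine rpow_le_rpow_of_exponent_le hn1 (cut_exponent_le hs (mul_self_sqrt hn0.le)
          (by exact_mod_cast hi) ?_ (by exact_mod_cast hk))
        exact_mod_cast hik

lemma sum_cutPotentialTerm_le_inv {n k : ℕ} (hn : 49 ≤ n) (hk : (k : ℝ) ≤ √n / 2) :
    ∑ i ∈ Finset.Icc 1 ((n - k) / 2), cutPotentialTerm n k i ≤ (n : ℝ)⁻¹ := by
  have hn0 : (0 : ℝ) < n := by positivity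
  have hn1 : (1 : ℝ) ≤ n := by exact_mod_cast (by omega : 1 ≤ n)
  have hs : 7 ≤ √n := by
    rw [le_sqrt (by norm_num) hn0.le]
    exact_mod_cast (show 7 ^ 2 ≤ n by omega)
  have hkn : k ≤ n := by
    have : √n ≤ n := by nlinarith [mul_self_sqrt hn0.le]
    have : (k : ℝ) ≤ n := by linarith
    exact_mod_cast this
  have hterm : ∀ i ∈ Finset.Icc 1 ((n - k) / 2), cutPotentialTerm n k i ≤ (n : ℝ) ^ (3 / 2 - √n / 2) := by
    intro i hi
    rw [Finset.mem_Icc, Nat.le_div_iff_mul_le two_pos] at hi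
    exact cutPotentialTerm_le (by omega) hk hi.1 (by omega)
  have hcard : ((Finset.Icc 1 ((n - k) / 2)).card : ℝ) ≤ n := by
    rw [Nat.card_Icc]; exact_mod_cast (by omega)
  calc ∑ i ∈ Finset.Icc 1 ((n - k) / 2), cutPotentialTerm n k i
      ≤ (Finset.Icc 1 ((n - k) / 2)).card * (n : ℝ) ^ (3 / 2 - √n / 2) := by
        simpa only [nsmul_eq_mul] using Finset.sum_le_card_nsmul _ _ _ hterm
    _ ≤ n * (n : ℝ) ^ (3 / 2 - √n / 2) := by gcongr
    _ = (n : ℝ) ^ (1 + (3 / 2 - √n / 2)) := by rw [rpow_add hn0, rpow_one]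
    _ ≤ (n : ℝ) ^ (-1 : ℝ) := rpow_le_rpow_of_exponent_le hn1 (by linarith)
    _ = (n : ℝ)⁻¹ := rpow_neg_one _

/-- With `k = ⌊√n/2⌋` and `b' = (log 2 / 2)·√n/log n`, the Erdős–Selfridge potential
of the cuts of `K_n` with `k` vertices removed,
`∑_{i=1}^{⌊(n-k)/2⌋} C(n,i)·C(n-i,k)·2^{-i(n-i-k)/b'}`, tends to `0`. -/
theorem stmt13 :
    Tendsto (fun n : ℕ =>
      ∑ i ∈ Finset.Icc 1 ((n - ⌊Real.sqrt n / 2⌋₊) / 2),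
        (n.choose i : ℝ) * ((n - i).choose ⌊Real.sqrt n / 2⌋₊ : ℝ) *
          (2 : ℝ) ^ (-((i * (n - i - ⌊Real.sqrt n / 2⌋₊) : ℕ) : ℝ) /
            (Real.log 2 / 2 * (Real.sqrt n / Real.log n))))
      atTop (nhds 0) := by
  change Tendsto (fun n : ℕ => ∑ i ∈ Finset.Icc 1 ((n - ⌊√n / 2⌋₊) / 2), cutPotentialTerm n ⌊√n / 2⌋₊ i)
    atTop (𝓝 0)
  refine squeeze_zero' (Eventually.of_forall fun n => Finset.sum_nonneg fun i _ => ?_)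
    ((eventually_ge_atTop 49).mono fun n hn => sum_cutPotentialTerm_le_inv hn (Nat.floor_le (by positivity)))
    tendsto_inv_atTop_nhds_zero_nat
  unfold cutPotentialTerm
  positivity
end

section
/- Let $n$ be even and $b_0=\frac{\log 2}{4}\cdot\frac{n}{\log n}$. Then for all sufficiently large $n$, $\sum_{k=1}^{n/2} \binom{n/2}{k}\binom{n/2}{n/2-k+1} 2^{-k(n/2-k+1)/b_0} < 1$. -/
/-!
Write `n = 2m` and `L = log (2m)`. Since `C(m, m-k+1) = C(m, k-1)` and `2^(-x/b₀) = exp (-2xL/m)`,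
the `k`-th summand is `C(m,k) C(m,k-1) (2m)^(-2k(m+1-k)/m)`, which is symmetric under
`k ↦ m+1-k`; so it suffices to bound it by `2^(-k)/4` when `2k ≤ m+1`.
For `4kL ≤ m` the exponent is at least `2k - k/(2L)`, and `C(m,k) C(m,k-1) ≤ m^(2k-1)` leaves
`2^(-k)/m`. For larger `k` the factor `(2m)^(-k)` beats `C(m,k)² ≤ (em/k)^(2k) ≤ (4eL)^(2k)`
as soon as `(16eL)² ≤ 2m`, which holds for all large `m`.
-/

open Real Finset Filter Asymptotics

lemma choose_le_exp_one_mul_div_pow (m k : ℕ) : (m.choose k : ℝ) ≤ (exp 1 * m / k) ^ k := by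
  have hk : (0 : ℝ) < (k : ℝ) ^ k := by
    rcases k.eq_zero_or_pos with rfl | hk
    · simp
    · positivity
  have hfac : (k : ℝ) ^ k / k.factorial ≤ exp 1 ^ k := by
    rw [← exp_nat_mul, mul_one]
    exact pow_div_factorial_le_exp _ k.cast_nonneg k
  calc (m.choose k : ℝ) ≤ m ^ k / k.factorial := Nat.choose_le_pow_div k m
    _ = (k : ℝ) ^ k / k.factorial * m ^ k / k ^ k := by field_simp
    _ ≤ exp 1 ^ k * m ^ k / k ^ k := by gcongr
    _ = (exp 1 * m / k) ^ k := by rw [div_pow, mul_pow]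

lemma choose_pred_le_choose {m k : ℕ} (h : 2 * k ≤ m + 1) : m.choose (k - 1) ≤ m.choose k := by
  obtain _ | j := k
  · rfl
  · have hrec := Nat.choose_succ_right_eq m j
    have hj : j + 1 ≤ m - j := by omega
    rw [Nat.add_sub_cancel]
    exact Nat.le_of_mul_le_mul_right (hrec ▸ Nat.mul_le_mul_left _ hj) j.succ_pos

noncomputable def hallTerm (m k : ℕ) : ℝ :=
  m.choose k * m.choose (k - 1) * exp (-(2 * k * (m + 1 - k) / m * log (2 * m)))

lemma hallTerm_reflect {m k : ℕ} (hk : 1 ≤ k) (hkm : k ≤ m) :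
    hallTerm m (m + 1 - k) = hallTerm m k := by
  have hchoose_pred : m.choose (m + 1 - k) = m.choose (k - 1) := by
    rw [show m + 1 - k = m - (k - 1) by omega, Nat.choose_symm (by omega)]
  have hchoose : m.choose (m + 1 - k - 1) = m.choose k := by
    rw [show m + 1 - k - 1 = m - k by omega, Nat.choose_symm hkm]
  have hcast : ((m + 1 - k : ℕ) : ℝ) = m + 1 - k := by
    rw [Nat.cast_sub (by omega)]; push_cast; ring
  rw [hallTerm, hallTerm, hchoose_pred, hchoose, hcast, mul_right_comm (m.choose (k - 1) : ℝ)]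
  ring_nf

lemma hallTerm_le_of_small {m k : ℕ} (hm : 4 ≤ m) (hk : 1 ≤ k)
    (hsmall : 4 * k * log (2 * m) ≤ m) : hallTerm m k ≤ 1 / 4 * (1 / 2) ^ k := by
  set L := log (2 * m)
  have hm0 : (0 : ℝ) < m := by positivity
  have hL : exp L = 2 * m := exp_log (by positivity)
  have hL0 : 0 ≤ L := log_nonneg (by norm_cast; omega)
  have hexp : -(2 * k * (m + 1 - k) / m * L) ≤ k * (1 / 2 - 2 * L) := by
    rw [neg_le, div_mul_eq_mul_div, le_div_iff₀ hm0]
    nlinarith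
  have hsqrt_e : exp (1 / 2) ≤ 2 := (le_log_iff_exp_le two_pos).1 (by linarith [log_two_gt_d9])
  have hdecay : exp (-(2 * k * (m + 1 - k) / m * L)) ≤ (1 / (2 * m ^ 2)) ^ k := calc
    _ ≤ exp (1 / 2 - 2 * L) ^ k := by rw [← exp_nat_mul]; exact exp_le_exp.2 hexp
    _ = (exp (1 / 2) / (2 * m) ^ 2) ^ k := by rw [exp_sub, two_mul L, exp_add, hL]; ring
    _ ≤ (2 / (2 * m) ^ 2) ^ k := by gcongr
    _ = (1 / (2 * m ^ 2)) ^ k := by congr 1; field_simp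
  have hchoose : (m.choose k : ℝ) * m.choose (k - 1) ≤ m ^ (2 * k) / m := by
    have hk_le : (m.choose k : ℝ) ≤ m ^ k := by exact_mod_cast Nat.choose_le_pow m k
    have hpred_le : (m.choose (k - 1) : ℝ) ≤ m ^ (k - 1) := by
      exact_mod_cast Nat.choose_le_pow m (k - 1)
    calc _ ≤ (m : ℝ) ^ k * m ^ (k - 1) := by gcongr
      _ = m ^ (2 * k) / m := by
        rw [eq_div_iff hm0.ne', mul_assoc, ← pow_succ, Nat.sub_add_cancel hk, ← pow_add, two_mul]
  calc hallTerm m k ≤ m ^ (2 * k) / m * (1 / (2 * m ^ 2)) ^ k := by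
        unfold hallTerm; gcongr
    _ = (1 / 2) ^ k / m := by
        rw [pow_mul, div_mul_eq_mul_div, ← mul_pow]; congr 2; field_simp
    _ ≤ 1 / 4 * (1 / 2) ^ k := by
        rw [div_le_iff₀ hm0]
        have : (4 : ℝ) ≤ m := by exact_mod_cast hm
        nlinarith [pow_pos (by norm_num : (0 : ℝ) < 1 / 2) k]

lemma hallTerm_le_of_large {m k : ℕ} (hk : 1 ≤ k) (hkm : 2 * k ≤ m + 1)
    (hlarge : m < 4 * k * log (2 * m)) (hm : (16 * exp 1 * log (2 * m)) ^ 2 ≤ 2 * m) :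
    hallTerm m k ≤ 1 / 4 * (1 / 2) ^ k := by
  set L := log (2 * m)
  have hm0 : (0 : ℝ) < m := by norm_cast; omega
  have hk0 : (0 : ℝ) < k := by norm_cast
  have hL : exp L = 2 * m := exp_log (by positivity)
  have hL0 : 0 ≤ L := log_nonneg (by norm_cast; omega)
  have hexp : -(2 * k * (m + 1 - k) / m * L) ≤ k * -L := by
    have : (2 * k : ℝ) ≤ m + 1 := by exact_mod_cast hkm
    rw [neg_le, div_mul_eq_mul_div, le_div_iff₀ hm0]
    nlinarith
  have hdecay : exp (-(2 * k * (m + 1 - k) / m * L)) ≤ (1 / (2 * m)) ^ k := by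
    rw [one_div, ← hL, ← exp_neg, ← exp_nat_mul]
    exact exp_le_exp.2 hexp
  have hchoose : (m.choose k : ℝ) * m.choose (k - 1) ≤ ((4 * exp 1 * L) ^ 2) ^ k := by
    have hratio : exp 1 * m / k ≤ 4 * exp 1 * L := by
      rw [div_le_iff₀ hk0]; nlinarith [exp_pos 1]
    have hk_le : (m.choose k : ℝ) ≤ (4 * exp 1 * L) ^ k :=
      (choose_le_exp_one_mul_div_pow m k).trans (by gcongr)
    have hpred_le : (m.choose (k - 1) : ℝ) ≤ m.choose k := by
      exact_mod_cast choose_pred_le_choose hkm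
    calc _ ≤ (4 * exp 1 * L) ^ k * (4 * exp 1 * L) ^ k := by gcongr; exact hpred_le.trans hk_le
      _ = _ := by rw [← pow_add, ← pow_mul, two_mul]
  have hbase : (4 * exp 1 * L) ^ 2 * (1 / (2 * m)) ≤ 1 / 16 := by
    rw [mul_one_div, div_le_iff₀ (by positivity)]; nlinarith
  calc hallTerm m k ≤ ((4 * exp 1 * L) ^ 2) ^ k * (1 / (2 * m)) ^ k := by
        unfold hallTerm; gcongr
    _ ≤ (1 / 16) ^ k := by rw [← mul_pow]; gcongr
    _ = (1 / 8) ^ k * (1 / 2) ^ k := by rw [← mul_pow]; norm_num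
    _ ≤ 1 / 4 * (1 / 2) ^ k := by
        gcongr
        calc ((1 : ℝ) / 8) ^ k ≤ 1 / 8 := pow_le_of_le_one (by norm_num) (by norm_num) (by omega)
          _ ≤ 1 / 4 := by norm_num

lemma hallTerm_le_of_two_mul_le {m k : ℕ} (hm4 : 4 ≤ m)
    (hm : (16 * exp 1 * log (2 * m)) ^ 2 ≤ 2 * m) (hk : 1 ≤ k) (hkm : 2 * k ≤ m + 1) :
    hallTerm m k ≤ 1 / 4 * (1 / 2) ^ k := by
  rcases le_or_gt (4 * k * log (2 * m)) m with hsmall | hlarge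
  · exact hallTerm_le_of_small hm4 hk hsmall
  · exact hallTerm_le_of_large hk hkm hlarge hm

lemma sum_hallTerm_lt_one {m : ℕ} (hm4 : 4 ≤ m) (hm : (16 * exp 1 * log (2 * m)) ^ 2 ≤ 2 * m) :
    ∑ k ∈ Icc 1 m, hallTerm m k < 1 := by
  have hterm : ∀ k ∈ Icc 1 m, hallTerm m k ≤ 1 / 4 * ((1 / 2) ^ k + (1 / 2) ^ (m + 1 - k)) := by
    intro k hk
    obtain ⟨hk1, hkm⟩ := mem_Icc.1 hk
    have hpos (j : ℕ) : (0 : ℝ) < (1 / 2) ^ j := by positivity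
    rcases le_or_gt (2 * k) (m + 1) with h | h
    · linarith [hallTerm_le_of_two_mul_le hm4 hm hk1 h, hpos (m + 1 - k)]
    · have hreflected := hallTerm_le_of_two_mul_le hm4 hm (k := m + 1 - k) (by omega) (by omega)
      rw [hallTerm_reflect hk1 hkm] at hreflected
      linarith [hpos k]
  have hreflect : ∑ k ∈ Icc 1 m, ((1 : ℝ) / 2) ^ (m + 1 - k) = ∑ k ∈ Icc 1 m, (1 / 2) ^ k := by
    refine sum_nbij' (fun k ↦ m + 1 - k) (fun k ↦ m + 1 - k) ?_ ?_ ?_ ?_ fun _ _ ↦ rfl <;>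
      intro k hk <;> simp only [mem_Icc] at hk ⊢ <;> omega
  have hgeom : ∑ k ∈ Icc 1 m, ((1 : ℝ) / 2) ^ k ≤ 1 := by
    rw [← Ico_add_one_right_eq_Icc]
    exact (geom_sum_Ico_le_of_lt_one (by norm_num) (by norm_num)).trans (by norm_num)
  calc ∑ k ∈ Icc 1 m, hallTerm m k
      ≤ ∑ k ∈ Icc 1 m, 1 / 4 * ((1 / 2) ^ k + (1 / 2) ^ (m + 1 - k)) := sum_le_sum hterm
    _ = 1 / 4 * (∑ k ∈ Icc 1 m, ((1 : ℝ) / 2) ^ k + ∑ k ∈ Icc 1 m, (1 / 2) ^ (m + 1 - k)) := by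
        rw [← sum_add_distrib, mul_sum]
    _ < 1 := by rw [hreflect]; linarith

lemma potential_summand_eq_hallTerm {m k : ℕ} (hk : 1 ≤ k) (hkm : k ≤ m) :
    (m.choose k : ℝ) * m.choose (m - k + 1) *
        (2 : ℝ) ^ (-((k * (m - k + 1) : ℕ) : ℝ) /
          (log 2 / 4 * (((m + m : ℕ) : ℝ) / log ((m + m : ℕ) : ℝ)))) = hallTerm m k := by
  have hchoose : m.choose (m - k + 1) = m.choose (k - 1) := by
    rw [show m - k + 1 = m - (k - 1) by omega, Nat.choose_symm (by omega)]
  have hcast : ((m + m : ℕ) : ℝ) = 2 * m := by push_cast; ring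
  have hprod : ((k * (m - k + 1) : ℕ) : ℝ) = k * (m + 1 - k) := by
    rw [Nat.cast_mul, Nat.cast_add, Nat.cast_sub hkm]; push_cast; ring
  rw [hallTerm, hchoose, hcast, hprod, rpow_def_of_pos two_pos]
  congr 2
  field_simp
  ring

lemma eventually_sq_log_le_self (c : ℝ) : ∀ᶠ x : ℝ in atTop, (c * log x) ^ 2 ≤ x := by
  have hc : (0 : ℝ) < 1 / (c ^ 2 + 1) := by positivity
  filter_upwards [(isLittleO_pow_log_id_atTop (n := 2)).bound hc, eventually_ge_atTop 0]
    with x hx hx0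
  simp only [norm_pow, Real.norm_eq_abs, sq_abs, id, abs_of_nonneg hx0] at hx
  rw [mul_pow]
  calc c ^ 2 * log x ^ 2 ≤ (c ^ 2 + 1) * log x ^ 2 := by gcongr; linarith
    _ ≤ (c ^ 2 + 1) * (1 / (c ^ 2 + 1) * x) := by gcongr
    _ = x := by field_simp

/-- For even `n` large enough and `b₀ = (log 2 / 4) · n / log n`, the Erdős–Selfridge
potential of the Hall-type family in the perfect matching game satisfies
`∑_{k=1}^{n/2} C(n/2,k)·C(n/2,n/2-k+1)·2^{-k(n/2-k+1)/b₀} < 1`. -/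
theorem stmt14 :
    ∃ N : ℕ, ∀ n ≥ N, Even n →
      ∑ k ∈ Finset.Icc 1 (n / 2),
        ((n / 2).choose k : ℝ) * ((n / 2).choose (n / 2 - k + 1) : ℝ) *
          (2 : ℝ) ^ (-((k * (n / 2 - k + 1) : ℕ) : ℝ) /
            (Real.log 2 / 4 * ((n : ℝ) / Real.log n))) < 1 := by
  obtain ⟨N, hN⟩ := eventually_atTop.1 <|
    tendsto_natCast_atTop_atTop.eventually (eventually_sq_log_le_self (16 * exp 1))
  refine ⟨max N 8, fun n hn ⟨m, hnm⟩ => ?_⟩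
  subst hnm
  rw [show (m + m) / 2 = m by omega,
    sum_congr rfl fun k hk => potential_summand_eq_hallTerm (mem_Icc.1 hk).1 (mem_Icc.1 hk).2]
  have hm := hN (m + m) (le_of_max_le_left hn)
  push_cast [← two_mul] at hm
  exact sum_hallTerm_lt_one (by omega) hm
end

section
/- Maker (as second player) wins the unbiased Maker–Breaker connectivity game on a finite multigraph $G$ (Maker's goal: claim the edge set of a connected spanning subgraph) if $G$ contains two edge-disjoint spanning trees. -/
open scoped Classical
namespace LehmanAux

open SimpleGraph

variable {V : Type} [DecidableEq V]

set_option linter.unusedSectionVars false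

def EConn (S : Finset (Sym2 V)) : Prop :=
  (SimpleGraph.fromEdgeSet (↑S : Set (Sym2 V))).Connected

lemma econn_mono {S T : Finset (Sym2 V)} (hST : S ⊆ T) (h : EConn S) : EConn T :=
  SimpleGraph.Connected.mono (SimpleGraph.fromEdgeSet_mono (Finset.coe_subset.mpr hST)) h

lemma econn_mk {S : Finset (Sym2 V)} (hne : Nonempty V)
    (h : ∀ a c : V, (fromEdgeSet (↑S : Set (Sym2 V))).Reachable a c) : EConn S :=
  @SimpleGraph.Connected.mk _ _ h hne

lemma reach_two_sides {s : Set (Sym2 V)} {x y : V}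
    (hconn : (fromEdgeSet s).Connected) (v : V) :
    (fromEdgeSet (s \ {s(x,y)})).Reachable v x ∨
      (fromEdgeSet (s \ {s(x,y)})).Reachable v y := by
  obtain ⟨p⟩ := hconn.preconnected v x
  suffices H : ∀ (a z : V) (_ : (fromEdgeSet s).Walk a z), z = x →
      (fromEdgeSet (s \ {s(x,y)})).Reachable a x ∨
        (fromEdgeSet (s \ {s(x,y)})).Reachable a y from H v x p rfl
  intro a z p
  induction p with
  | nil => rintro rfl; exact Or.inl (Reachable.refl _)
  | @cons u w _ h p ih =>
    intro hz
    rw [fromEdgeSet_adj] at h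
    by_cases he : s(u,w) = s(x,y)
    · rw [Sym2.eq_iff] at he
      rcases he with ⟨rfl, rfl⟩ | ⟨rfl, rfl⟩
      · exact Or.inl (Reachable.refl _)
      · exact Or.inr (Reachable.refl _)
    · have hadj : (fromEdgeSet (s \ {s(x,y)})).Adj u w := by
        rw [fromEdgeSet_adj]; exact ⟨⟨h.1, he⟩, h.2⟩
      rcases ih hz with h1 | h1
      · exact Or.inl (hadj.reachable.trans h1)
      · exact Or.inr (hadj.reachable.trans h1)

lemma crossing {s' t : Set (Sym2 V)} {x y : V}
    (hsides : ∀ v, (fromEdgeSet s').Reachable v x ∨ (fromEdgeSet s').Reachable v y)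
    (hxy : ¬ (fromEdgeSet s').Reachable x y)
    (ht : (fromEdgeSet t).Preconnected) :
    ∃ u w, s(u,w) ∈ t ∧ (fromEdgeSet s').Reachable u x ∧
      (fromEdgeSet s').Reachable w y := by
  obtain ⟨p⟩ := ht x y
  suffices H : ∀ (a z : V) (_ : (fromEdgeSet t).Walk a z), z = y →
      (fromEdgeSet s').Reachable a x → ∃ u w, s(u,w) ∈ t ∧
        (fromEdgeSet s').Reachable u x ∧ (fromEdgeSet s').Reachable w y from
    H x y p rfl (Reachable.refl x)
  intro a z p
  induction p with
  | nil => rintro rfl hax; exact absurd hax.symm hxy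
  | @cons u c _ h p ih =>
    intro hz hux
    rcases hsides c with hcx | hcy
    · exact ih hz hcx
    · rw [fromEdgeSet_adj] at h
      exact ⟨u, c, h.1, hux, hcy⟩

lemma exchange {M T₁ T₂ : Finset (Sym2 V)} {b : Sym2 V} (hb1 : b ∈ T₁) (hbM : b ∉ M)
    (hbd : ¬ b.IsDiag) (hdisj : Disjoint T₁ T₂)
    (hc1 : EConn (M ∪ T₁)) (hc2 : EConn (M ∪ T₂))
    (hdisc : ¬ EConn (M ∪ T₁.erase b)) :
    ∃ f ∈ T₂, f ∉ M ∧ f ∉ T₁ ∧ EConn (insert f (M ∪ T₁.erase b)) := by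
  induction b using Sym2.ind with
  | _ x y =>
  have hxyne : x ≠ y := by rwa [Sym2.mk_isDiag_iff] at hbd
  have hset : (↑(M ∪ T₁.erase s(x,y)) : Set (Sym2 V)) = ↑(M ∪ T₁) \ {s(x,y)} := by
    ext e
    simp only [Finset.coe_union, Set.mem_union, Finset.mem_coe, Finset.mem_erase,
      Set.mem_diff, Set.mem_singleton_iff]
    constructor
    · rintro (hMe | ⟨hne, hT⟩)
      · exact ⟨Or.inl hMe, fun h => hbM (by rwa [h] at hMe)⟩
      · exact ⟨Or.inr hT, hne⟩
    · rintro ⟨hMe | hT, hne⟩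
      · exact Or.inl hMe
      · exact Or.inr ⟨hne, hT⟩
  have hsides : ∀ v, (fromEdgeSet (↑(M ∪ T₁.erase s(x,y)) : Set (Sym2 V))).Reachable v x ∨
      (fromEdgeSet (↑(M ∪ T₁.erase s(x,y)) : Set (Sym2 V))).Reachable v y := by
    intro v
    rw [hset]
    exact reach_two_sides hc1 v
  have hNe : Nonempty V := hc1.nonempty
  have hNxy : ¬ (fromEdgeSet (↑(M ∪ T₁.erase s(x,y)) : Set (Sym2 V))).Reachable x y := by
    intro hxy
    apply hdisc
    refine econn_mk hNe (fun a c => ?_)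
    have key : ∀ v, (fromEdgeSet (↑(M ∪ T₁.erase s(x,y)) : Set (Sym2 V))).Reachable v x := by
      intro v
      rcases hsides v with h | h
      · exact h
      · exact h.trans hxy.symm
    exact (key a).trans (key c).symm
  obtain ⟨u, w, huw, hux, hwy⟩ := crossing hsides hNxy hc2.preconnected
  have hune : u ≠ w := by
    rintro rfl
    exact hNxy (hux.symm.trans hwy)
  have hfs' : s(u,w) ∉ (↑(M ∪ T₁.erase s(x,y)) : Set (Sym2 V)) := by
    intro hf
    have hadj : (fromEdgeSet (↑(M ∪ T₁.erase s(x,y)) : Set (Sym2 V))).Adj u w := by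
      rw [fromEdgeSet_adj]; exact ⟨hf, hune⟩
    exact hNxy (hux.symm.trans (hadj.reachable.trans hwy))
  have hfM : s(u,w) ∉ M := fun h => hfs' (by
    simp only [Finset.coe_union, Set.mem_union, Finset.mem_coe]; exact Or.inl h)
  have hfT2 : s(u,w) ∈ T₂ := by
    simp only [Finset.coe_union, Set.mem_union, Finset.mem_coe] at huw
    exact huw.resolve_left hfM
  have hfT1 : s(u,w) ∉ T₁ := Finset.disjoint_right.mp hdisj hfT2
  refine ⟨s(u,w), hfT2, hfM, hfT1, econn_mk hNe (fun a c => ?_)⟩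
  have hmono : fromEdgeSet (↑(M ∪ T₁.erase s(x,y)) : Set (Sym2 V)) ≤
      fromEdgeSet (↑(insert s(u,w) (M ∪ T₁.erase s(x,y))) : Set (Sym2 V)) := by
    apply fromEdgeSet_mono
    rw [Finset.coe_insert]
    exact Set.subset_insert _ _
  have hadj : (fromEdgeSet (↑(insert s(u,w) (M ∪ T₁.erase s(x,y))) : Set (Sym2 V))).Adj u w := by
    rw [fromEdgeSet_adj]
    exact ⟨by simp, hune⟩
  have hxy' : (fromEdgeSet (↑(insert s(u,w) (M ∪ T₁.erase s(x,y))) :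
      Set (Sym2 V))).Reachable x y :=
    ((hux.mono hmono).symm.trans hadj.reachable).trans (hwy.mono hmono)
  have key : ∀ v, (fromEdgeSet (↑(insert s(u,w) (M ∪ T₁.erase s(x,y))) :
      Set (Sym2 V))).Reachable v x := by
    intro v
    rcases hsides v with h | h
    · exact h.mono hmono
    · exact (h.mono hmono).trans hxy'.symm
  exact (key a).trans (key c).symm


section Game

variable [Fintype V] (G : SimpleGraph V)

def Fam : Set (Finset (Sym2 V)) :=
  {S : Finset (Sym2 V) | ↑S ⊆ G.edgeSet ∧
    (SimpleGraph.fromEdgeSet (↑S : Set (Sym2 V))).Connected}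

lemma winNow {M B : Finset (Sym2 V)} {t : Bool} (hM : M ⊆ G.edgeFinset) (hc : EConn M) :
    MWin G.edgeFinset (Fam G) 1 1 t M B :=
  MWin.win t M B M ⟨fun e he => (SimpleGraph.mem_edgeFinset).mp (hM (Finset.mem_coe.mp he)), hc⟩
    (Finset.Subset.refl M)

set_option maxHeartbeats 2000000 in
/-- The key invariant: Maker (to move second) wins whenever there are two disjoint
sets of unclaimed edges each of which, together with Maker's edges, spans connectedly. -/
lemma key : ∀ n (M B T₁ T₂ : Finset (Sym2 V)),
    T₁.card + T₂.card ≤ n →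
    M ⊆ G.edgeFinset →
    T₁ ⊆ G.edgeFinset \ (M ∪ B) →
    T₂ ⊆ G.edgeFinset \ (M ∪ B) →
    Disjoint T₁ T₂ →
    EConn (M ∪ T₁) → EConn (M ∪ T₂) →
    MWin G.edgeFinset (Fam G) 1 1 false M B := by
  intro n
  induction n using Nat.strong_induction_on with
  | _ n ih =>
  intro M B T₁ T₂ hn hM h1 h2 hd hc1 hc2
  -- a reusable "Maker's turn" step
  have makerTurn : ∀ (B' U₁ U₂ : Finset (Sym2 V)),
      U₁.card + U₂.card ≤ n →
      U₁ ⊆ G.edgeFinset \ (M ∪ B') → U₂ ⊆ G.edgeFinset \ (M ∪ B') →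
      Disjoint U₁ U₂ → EConn (M ∪ U₁) → EConn (M ∪ U₂) →
      MWin G.edgeFinset (Fam G) 1 1 true M B' := by
    intro B' U₁ U₂ hUn hU1 hU2 hUd hcU1 hcU2
    rcases U₁.eq_empty_or_nonempty with rfl | ⟨e, he⟩
    · exact winNow G hM (by simpa using hcU1)
    · have hef : e ∈ G.edgeFinset \ (M ∪ B') := hU1 he
      have hfree : (G.edgeFinset \ (M ∪ B')).Nonempty := ⟨e, hef⟩
      have hcard1 : 1 ≤ U₁.card := Finset.card_pos.mpr ⟨e, he⟩
      refine MWin.maker M B' {e} (Finset.singleton_subset_iff.mpr hef) ?_ ?_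
      · rw [Finset.card_singleton, min_eq_left (Finset.card_pos.mpr hfree)]
      · refine ih (n - 1) (by omega) (M ∪ {e}) B' (U₁.erase e) U₂ ?_ ?_ ?_ ?_ ?_ ?_ ?_
        · rw [Finset.card_erase_of_mem he]; omega
        · exact Finset.union_subset hM (Finset.singleton_subset_iff.mpr
            (Finset.mem_sdiff.mp hef).1)
        · intro x hx
          have hxe : x ≠ e := (Finset.mem_erase.mp hx).1
          have hx' := hU1 (Finset.mem_erase.mp hx).2
          simp only [Finset.mem_sdiff, Finset.mem_union, Finset.mem_singleton] at hx' ⊢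
          tauto
        · intro x hx
          have hxe : x ≠ e := fun h => Finset.disjoint_right.mp hUd hx (h ▸ he)
          have hx' := hU2 hx
          simp only [Finset.mem_sdiff, Finset.mem_union, Finset.mem_singleton] at hx' ⊢
          tauto
        · exact hUd.mono_left (Finset.erase_subset _ _)
        · have heq : M ∪ {e} ∪ U₁.erase e = M ∪ U₁ := by
            ext x
            simp only [Finset.mem_union, Finset.mem_singleton, Finset.mem_erase]
            by_cases hxe : x = e
            · subst hxe; simp [he]
            · simp [hxe]
          rw [heq]; exact hcU1
        · exact econn_mono (Finset.union_subset_union Finset.subset_union_left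
            (Finset.Subset.refl _)) hcU2
  refine MWin.breaker M B (fun m hm hcard => ?_)
  rcases T₁.eq_empty_or_nonempty with rfl | hT1ne
  · exact winNow G hM (by simpa using hc1)
  obtain ⟨e0, he0⟩ := hT1ne
  have hfree : (G.edgeFinset \ (M ∪ B)).Nonempty := ⟨e0, h1 he0⟩
  have hm1 : m.card = 1 := by rw [hcard, min_eq_left (Finset.card_pos.mpr hfree)]
  obtain ⟨b, rfl⟩ := Finset.card_eq_one.mp hm1
  have hbfree : b ∈ G.edgeFinset \ (M ∪ B) := hm (Finset.mem_singleton_self b)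
  have hbboard : b ∈ G.edgeFinset := (Finset.mem_sdiff.mp hbfree).1
  have hbMB : b ∉ M ∪ B := (Finset.mem_sdiff.mp hbfree).2
  have hbM : b ∉ M := fun h => hbMB (Finset.mem_union.mpr (Or.inl h))
  have hbd : ¬ b.IsDiag :=
    SimpleGraph.not_isDiag_of_mem_edgeSet G (SimpleGraph.mem_edgeFinset.mp hbboard)
  -- passing from `board \ (M ∪ B)` to `board \ (M ∪ (B ∪ {b}))`
  have hstep : ∀ T : Finset (Sym2 V), T ⊆ G.edgeFinset \ (M ∪ B) → b ∉ T →
      T ⊆ G.edgeFinset \ (M ∪ (B ∪ {b})) := by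
    intro T hT hbT x hx
    have hxb : x ≠ b := fun h => hbT (h ▸ hx)
    have hx' := hT hx
    simp only [Finset.mem_sdiff, Finset.mem_union, Finset.mem_singleton] at hx' ⊢
    tauto
  -- the case where Breaker's edge hits one of the two trees
  have handle : ∀ U₁ U₂ : Finset (Sym2 V),
      U₁ ⊆ G.edgeFinset \ (M ∪ B) → U₂ ⊆ G.edgeFinset \ (M ∪ B) →
      Disjoint U₁ U₂ → EConn (M ∪ U₁) → EConn (M ∪ U₂) →
      U₁.card + U₂.card ≤ n → b ∈ U₁ →
      MWin G.edgeFinset (Fam G) 1 1 true M (B ∪ {b}) := by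
    intro U₁ U₂ hU1 hU2 hUd hcU1 hcU2 hUn hbU1
    have hbU2 : b ∉ U₂ := Finset.disjoint_left.mp hUd hbU1
    have hU1e : U₁.erase b ⊆ G.edgeFinset \ (M ∪ (B ∪ {b})) := by
      intro x hx
      have hxb : x ≠ b := (Finset.mem_erase.mp hx).1
      have hx' := hU1 (Finset.mem_erase.mp hx).2
      simp only [Finset.mem_sdiff, Finset.mem_union, Finset.mem_singleton] at hx' ⊢
      tauto
    have hcardU1 : 1 ≤ U₁.card := Finset.card_pos.mpr ⟨b, hbU1⟩
    by_cases hcon : EConn (M ∪ U₁.erase b)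
    · refine makerTurn (B ∪ {b}) (U₁.erase b) U₂ ?_ hU1e (hstep U₂ hU2 hbU2)
        (hUd.mono_left (Finset.erase_subset _ _)) hcon hcU2
      rw [Finset.card_erase_of_mem hbU1]; omega
    · obtain ⟨f, hfU2, hfM, hfU1, hcf⟩ := exchange hbU1 hbM hbd hUd hcU1 hcU2 hcon
      have hcardU2 : 1 ≤ U₂.card := Finset.card_pos.mpr ⟨f, hfU2⟩
      have hffree : f ∈ G.edgeFinset \ (M ∪ (B ∪ {b})) :=
        hstep U₂ hU2 hbU2 hfU2
      refine MWin.maker M (B ∪ {b}) {f} (Finset.singleton_subset_iff.mpr hffree) ?_ ?_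
      · rw [Finset.card_singleton, min_eq_left (Finset.card_pos.mpr ⟨f, hffree⟩)]
      · refine ih (n - 1) (by omega) (M ∪ {f}) (B ∪ {b}) (U₁.erase b) (U₂.erase f)
          ?_ ?_ ?_ ?_ ?_ ?_ ?_
        · rw [Finset.card_erase_of_mem hbU1, Finset.card_erase_of_mem hfU2]; omega
        · exact Finset.union_subset hM (Finset.singleton_subset_iff.mpr
            (Finset.mem_sdiff.mp hffree).1)
        · intro x hx
          have hxf : x ≠ f := fun h => hfU1 (h ▸ (Finset.mem_erase.mp hx).2)
          have hx' := hU1e hx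
          simp only [Finset.mem_sdiff, Finset.mem_union, Finset.mem_singleton] at hx' ⊢
          tauto
        · intro x hx
          have hxf : x ≠ f := (Finset.mem_erase.mp hx).1
          have hx' := hstep U₂ hU2 hbU2 (Finset.mem_erase.mp hx).2
          simp only [Finset.mem_sdiff, Finset.mem_union, Finset.mem_singleton] at hx' ⊢
          tauto
        · exact (hUd.mono_left (Finset.erase_subset _ _)).mono_right
            (Finset.erase_subset _ _)
        · have heq : M ∪ {f} ∪ U₁.erase b = insert f (M ∪ U₁.erase b) := by
            ext x
            simp only [Finset.mem_union, Finset.mem_singleton, Finset.mem_insert,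
              Finset.mem_erase]
            tauto
          rw [heq]; exact hcf
        · have heq : M ∪ {f} ∪ U₂.erase f = M ∪ U₂ := by
            ext x
            simp only [Finset.mem_union, Finset.mem_singleton, Finset.mem_erase]
            by_cases hxf : x = f
            · subst hxf; simp [hfU2]
            · simp [hxf]
          rw [heq]; exact hcU2
  by_cases hb1 : b ∈ T₁
  · exact handle T₁ T₂ h1 h2 hd hc1 hc2 hn hb1
  by_cases hb2 : b ∈ T₂
  · exact handle T₂ T₁ h2 h1 hd.symm hc2 hc1 (by omega) hb2
  · exact makerTurn (B ∪ {b}) T₁ T₂ hn (hstep T₁ h1 hb1) (hstep T₂ h2 hb2) hd hc1 hc2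

end Game

end LehmanAux

/-- Lehman's theorem: if a finite graph `G` contains two edge-disjoint spanning
trees, then Maker, as the second player, wins the unbiased Maker–Breaker
connectivity game on the edges of `G` (Maker's goal: claim the edge set of a
connected spanning subgraph of `G`). -/
theorem stmt17 {V : Type} [Fintype V] [DecidableEq V] (G : SimpleGraph V)
    (h : ∃ T₁ T₂ : SimpleGraph V, T₁ ≤ G ∧ T₂ ≤ G ∧ T₁.IsTree ∧ T₂.IsTree ∧
      Disjoint T₁.edgeSet T₂.edgeSet) :
    MWin G.edgeFinset
      {S : Finset (Sym2 V) | ↑S ⊆ G.edgeSet ∧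
        (SimpleGraph.fromEdgeSet (↑S : Set (Sym2 V))).Connected}
      1 1 false ∅ ∅ := by
  open LehmanAux in

  obtain ⟨T₁, T₂, h1G, h2G, h1t, h2t, hdisj⟩ := h
  have key' := key G (T₁.edgeFinset.card + T₂.edgeFinset.card) ∅ ∅ T₁.edgeFinset T₂.edgeFinset
    le_rfl (Finset.empty_subset _) ?_ ?_ ?_ ?_ ?_
  · exact key'
  · intro x hx
    rw [Finset.mem_sdiff]
    refine ⟨?_, by simp⟩
    rw [SimpleGraph.mem_edgeFinset] at hx ⊢
    exact SimpleGraph.edgeSet_mono h1G hx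
  · intro x hx
    rw [Finset.mem_sdiff]
    refine ⟨?_, by simp⟩
    rw [SimpleGraph.mem_edgeFinset] at hx ⊢
    exact SimpleGraph.edgeSet_mono h2G hx
  · rw [Finset.disjoint_left]
    intro x hx hx'
    rw [SimpleGraph.mem_edgeFinset] at hx hx'
    exact Set.disjoint_left.mp hdisj hx hx'
  · show EConn _
    rw [EConn, Finset.empty_union, SimpleGraph.coe_edgeFinset, SimpleGraph.fromEdgeSet_edgeSet]
    exact h1t.isConnected
  · show EConn _
    rw [EConn, Finset.empty_union, SimpleGraph.coe_edgeFinset, SimpleGraph.fromEdgeSet_edgeSet]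
    exact h2t.isConnected
end
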